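/- arXiv:0808.2608 — 7 statements merged into one kernel-verified Lean document; each statement's English description precedes it below -/
import Mathlib

section
/- For every complex number z and every real number r, the Gaussian e^{-z^2} admits the contour integral representation e^{-z^2} = (1/(i√π)) ∫_{Γ_r} e^{w^2 - 2zw} dw, where Γ_r is the vertical line t ↦ r + it, t ∈ ℝ. -/
open MeasureTheory

/-- Contour integral representation of the Gaussian: for every complex `z` and real `r`,
`e^{-z²} = (1/(i√π)) ∫_{Γ_r} e^{w² - 2zw} dw`, where `Γ_r(t) = r + it`. -/
theorem gaussian_contour_integral (z : ℂ) (r : ℝ) :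
    Complex.exp (-z ^ 2) =
      (1 / (Complex.I * Real.sqrt Real.pi)) *
        ∫ t : ℝ, Complex.exp (((r : ℂ) + t * Complex.I) ^ 2
            - 2 * z * ((r : ℂ) + t * Complex.I)) * Complex.I := by
  have hb : (-1 : ℂ).re < 0 := by norm_num
  have key : (∫ t : ℝ, Complex.exp ((-1 : ℂ) * (t : ℂ) ^ 2
      + (2 * Complex.I * (r - z)) * t + (r ^ 2 - 2 * z * r)))
      = ((Real.pi : ℂ)) ^ (1 / 2 : ℂ) * Complex.exp (-z ^ 2) := by
    rw [integral_cexp_quadratic hb]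
    congr 1
    · norm_num
    · congr 1
      field_simp
      linear_combination (4 * r ^ 2 + 4 * z ^ 2 - 8 * r * z) * Complex.I_sq
  have heq : ∀ t : ℝ, ((r : ℂ) + t * Complex.I) ^ 2 - 2 * z * ((r : ℂ) + t * Complex.I)
      = (-1 : ℂ) * (t : ℂ) ^ 2 + (2 * Complex.I * (r - z)) * t + (r ^ 2 - 2 * z * r) := by
    intro t
    have : (Complex.I : ℂ) ^ 2 = -1 := Complex.I_sq
    ring_nf
    rw [Complex.I_sq]
    ring
  have hsqrt : ((Real.pi : ℂ)) ^ (1 / 2 : ℂ) = (Real.sqrt Real.pi : ℂ) := by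
    rw [Real.sqrt_eq_rpow, Complex.ofReal_cpow Real.pi_pos.le]
    norm_num
  simp_rw [heq]
  rw [integral_mul_const, key, hsqrt]
  have hI : Complex.I ≠ 0 := Complex.I_ne_zero
  have hpi : (Real.sqrt Real.pi : ℂ) ≠ 0 := by
    simp [Real.sqrt_eq_zero', Real.pi_pos.le, Real.pi_ne_zero, Real.pi_pos.not_gt]
  field_simp
end

section
/- For every nonnegative integer k, every complex z, and every real r, the Hermite polynomial H_k (physicists' normalization) satisfies H_k(z) = (2^k e^{z^2} / (i√π)) ∫_{Γ_r} w^k e^{w^2 - 2zw} dw, where Γ_r is the vertical line t ↦ r + it. -/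
open MeasureTheory

/-- Physicists' Hermite polynomial via Rodrigues' formula. -/
noncomputable def hermiteH (k : ℕ) (z : ℂ) : ℂ :=
  (-1) ^ k * Complex.exp (z ^ 2) * iteratedDeriv k (fun w => Complex.exp (-w ^ 2)) z

open Complex

noncomputable def F (r : ℝ) (k : ℕ) (z : ℂ) (t : ℝ) : ℂ :=
  ((r : ℂ) + t * I) ^ k * Complex.exp (((r : ℂ) + t * I) ^ 2 - 2 * z * ((r : ℂ) + t * I))

lemma gauss_lin (b : ℝ) : Integrable fun t : ℝ => Real.exp (-t ^ 2 + b * t) := by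
  have h := (integrable_cexp_quadratic' (b := -1) (by norm_num) (b : ℂ) 0).norm
  refine h.congr ?_
  filter_upwards with t
  rw [Complex.norm_exp]
  congr 1
  simp [Complex.add_re, Complex.mul_re, Complex.ofReal_re, Complex.ofReal_im, pow_two]


lemma pow_le_fact_exp {x : ℝ} (hx : 0 ≤ x) (k : ℕ) :
    x ^ k ≤ (k.factorial : ℝ) * Real.exp x := by
  have h1 : x ^ k / k.factorial ≤ Real.exp x := by
    refine le_trans ?_ (Real.sum_le_exp_of_nonneg hx (k + 1))
    exact Finset.single_le_sum (f := fun i => x ^ i / i.factorial)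
      (fun i _ => by positivity) (Finset.self_mem_range_succ k)
  have hk : (0 : ℝ) < k.factorial := by positivity
  calc x ^ k = (x ^ k / k.factorial) * k.factorial := by field_simp
    _ ≤ Real.exp x * k.factorial := by gcongr
    _ = _ := by ring

lemma F_norm (r : ℝ) (k : ℕ) (z : ℂ) (t : ℝ) :
    ‖F r k z t‖ = ‖(r : ℂ) + t * I‖ ^ k *
      Real.exp (r ^ 2 - t ^ 2 - 2 * (z.re * r - z.im * t)) := by
  rw [F, norm_mul, norm_pow, Complex.norm_exp]
  congr 2
  simp [Complex.add_re, Complex.mul_re, Complex.sub_re, pow_two]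
  ring

lemma F_le (r M : ℝ) (k : ℕ) (z : ℂ) (hz : ‖z‖ ≤ M) (t : ℝ) :
    ‖F r k z t‖ ≤ (k.factorial : ℝ) * Real.exp (r ^ 2 + |r| * (1 + 2 * M)) *
      (Real.exp (-t ^ 2 + (2 * M + 1) * t) + Real.exp (-t ^ 2 + (-(2 * M + 1)) * t)) := by
  have hre : |z.re| ≤ M := le_trans (Complex.abs_re_le_norm z) hz
  have him : |z.im| ≤ M := le_trans (Complex.abs_im_le_norm z) hz
  have h1 : -(z.re * r) ≤ M * |r| :=
    le_trans (neg_le_abs _) (by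
      rw [abs_mul]; exact mul_le_mul_of_nonneg_right hre (abs_nonneg r))
  have h2 : z.im * t ≤ M * |t| :=
    le_trans (le_abs_self _) (by
      rw [abs_mul]; exact mul_le_mul_of_nonneg_right him (abs_nonneg t))
  have hn : ‖(r : ℂ) + t * I‖ ≤ |r| + |t| := by
    refine le_trans (norm_add_le _ _) ?_
    simp
  rw [F_norm]
  calc ‖(r : ℂ) + t * I‖ ^ k * Real.exp (r ^ 2 - t ^ 2 - 2 * (z.re * r - z.im * t))
      ≤ (|r| + |t|) ^ k * Real.exp (r ^ 2 - t ^ 2 - 2 * (z.re * r - z.im * t)) := by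
        gcongr
    _ ≤ ((k.factorial : ℝ) * Real.exp (|r| + |t|)) *
          Real.exp (r ^ 2 - t ^ 2 - 2 * (z.re * r - z.im * t)) := by
        gcongr
        exact pow_le_fact_exp (by positivity) k
    _ = (k.factorial : ℝ) *
          Real.exp ((|r| + |t|) + (r ^ 2 - t ^ 2 - 2 * (z.re * r - z.im * t))) := by
        rw [Real.exp_add (|r| + |t|) (r ^ 2 - t ^ 2 - 2 * (z.re * r - z.im * t))]; ring
    _ ≤ (k.factorial : ℝ) *
          Real.exp ((r ^ 2 + |r| * (1 + 2 * M)) + (-t ^ 2 + (2 * M + 1) * |t|)) := by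
        refine mul_le_mul_of_nonneg_left (Real.exp_le_exp.mpr (by linarith)) (by positivity)
    _ = (k.factorial : ℝ) * Real.exp (r ^ 2 + |r| * (1 + 2 * M)) *
          Real.exp (-t ^ 2 + (2 * M + 1) * |t|) := by
        rw [Real.exp_add (r ^ 2 + |r| * (1 + 2 * M)) (-t ^ 2 + (2 * M + 1) * |t|)]; ring
    _ ≤ _ := by
        gcongr _ * ?_
        rcases abs_cases t with ⟨h, _⟩ | ⟨h, _⟩ <;> rw [h]
        · exact le_add_of_nonneg_right (Real.exp_pos _).le
        · have : (2 * M + 1) * (-t) = (-(2 * M + 1)) * t := by ring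
          rw [this]
          exact le_add_of_nonneg_left (Real.exp_pos _).le

lemma F_cont (r : ℝ) (k : ℕ) (z : ℂ) : Continuous (F r k z) := by
  unfold F; fun_prop

lemma bound_integrable (r M : ℝ) (k : ℕ) :
    Integrable (fun t : ℝ => (k.factorial : ℝ) * Real.exp (r ^ 2 + |r| * (1 + 2 * M)) *
      (Real.exp (-t ^ 2 + (2 * M + 1) * t) + Real.exp (-t ^ 2 + (-(2 * M + 1)) * t))) :=
  (((gauss_lin (2 * M + 1)).add (gauss_lin (-(2 * M + 1)))).const_mul _)

lemma F_integrable (r : ℝ) (k : ℕ) (z : ℂ) : Integrable (F r k z) := by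
  refine (bound_integrable r ‖z‖ k).mono' (F_cont r k z).aestronglyMeasurable ?_
  filter_upwards with t
  exact F_le r ‖z‖ k z le_rfl t

lemma F_hasDeriv (r : ℝ) (k : ℕ) (t : ℝ) (z : ℂ) :
    HasDerivAt (fun w => F r k w t) (-2 * F r (k + 1) z t) z := by
  have h1 : HasDerivAt (fun w : ℂ => ((r : ℂ) + t * I) ^ 2 - 2 * w * ((r : ℂ) + t * I))
      (-(2 * ((r : ℂ) + t * I))) z := by
    simpa using (((hasDerivAt_id z).const_mul (2 : ℂ)).mul_const ((r : ℂ) + t * I)).const_sub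
      (((r : ℂ) + t * I) ^ 2)
  have h2 : HasDerivAt (fun w : ℂ => ((r : ℂ) + t * I) ^ k *
      Complex.exp (((r : ℂ) + t * I) ^ 2 - 2 * w * ((r : ℂ) + t * I))) _ z :=
    (h1.cexp).const_mul (((r : ℂ) + t * I) ^ k)
  convert h2 using 1
  · rfl
  simp only [F]
  ring

lemma hasDeriv_J (r : ℝ) (k : ℕ) (z₀ : ℂ) :
    HasDerivAt (fun z => ∫ t : ℝ, F r k z t) (-2 * ∫ t : ℝ, F r (k + 1) z₀ t) z₀ := by
  have key := hasDerivAt_integral_of_dominated_loc_of_deriv_le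
    (F := fun z t => F r k z t) (F' := fun z t => -2 * F r (k + 1) z t)
    (x₀ := z₀) (s := Metric.ball z₀ 1)
    (bound := fun t => 2 * ((k + 1).factorial * Real.exp (r ^ 2 + |r| * (1 + 2 * (‖z₀‖ + 1))) *
      (Real.exp (-t ^ 2 + (2 * (‖z₀‖ + 1) + 1) * t) +
        Real.exp (-t ^ 2 + (-(2 * (‖z₀‖ + 1) + 1)) * t))))
    (Metric.ball_mem_nhds z₀ one_pos)
    (Filter.Eventually.of_forall fun z => (F_cont r k z).aestronglyMeasurable)
    (F_integrable r k z₀)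
    ((continuous_const.mul (F_cont r (k + 1) z₀)).aestronglyMeasurable)
    ?_ ((bound_integrable r (‖z₀‖ + 1) (k + 1)).const_mul 2) ?_
  · simpa only [integral_const_mul] using key.2
  · filter_upwards with t z hz
    rw [norm_mul]
    have hzM : ‖z‖ ≤ ‖z₀‖ + 1 := by
      have := mem_ball_iff_norm.mp hz
      calc ‖z‖ ≤ ‖z₀‖ + ‖z - z₀‖ := by
            simpa [add_comm] using norm_add_le (z - z₀) z₀
        _ ≤ ‖z₀‖ + 1 := by linarith
    have := F_le r (‖z₀‖ + 1) (k + 1) z hzM t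
    calc ‖(-2 : ℂ)‖ * ‖F r (k + 1) z t‖ = 2 * ‖F r (k + 1) z t‖ := by norm_num
      _ ≤ _ := by linarith
  · filter_upwards with t z _
    exact F_hasDeriv r k t z

lemma J_zero (r : ℝ) (z : ℂ) :
    ∫ t : ℝ, F r 0 z t = (Real.sqrt Real.pi : ℂ) * Complex.exp (-z ^ 2) := by
  have h : ∀ t : ℝ, F r 0 z t =
      Complex.exp ((-1 : ℂ) * (t : ℂ) ^ 2 + (2 * ((r : ℂ) - z) * I) * (t : ℂ) +
        ((r : ℂ) ^ 2 - 2 * z * r)) := by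
    intro t
    simp only [F, pow_zero, one_mul]
    congr 1
    ring_nf
    rw [Complex.I_sq]
    ring
  simp_rw [h]
  rw [integral_cexp_quadratic (by norm_num : (-1 : ℂ).re < 0)]
  have h1 : ((Real.pi : ℂ) / -(-1)) ^ (1 / 2 : ℂ) = (Real.sqrt Real.pi : ℂ) := by
    rw [neg_neg, div_one, Real.sqrt_eq_rpow, Complex.ofReal_cpow Real.pi_pos.le]
    norm_num
  rw [h1]
  congr 1
  field_simp
  ring_nf
  rw [Complex.I_sq]
  ring

lemma iter_eq (r : ℝ) (k : ℕ) : ∀ z : ℂ,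
    iteratedDeriv k (fun w => Complex.exp (-w ^ 2)) z =
      (-2 : ℂ) ^ k / (Real.sqrt Real.pi : ℂ) * ∫ t : ℝ, F r k z t := by
  have hpi : (Real.sqrt Real.pi : ℂ) ≠ 0 :=
    Complex.ofReal_ne_zero.mpr (Real.sqrt_ne_zero'.mpr Real.pi_pos)
  induction k with
  | zero =>
    intro z
    rw [iteratedDeriv_zero, J_zero]
    field_simp
  | succ k ih =>
    intro z
    rw [iteratedDeriv_succ]
    have hfe : iteratedDeriv k (fun w => Complex.exp (-w ^ 2)) =
        fun z => (-2 : ℂ) ^ k / (Real.sqrt Real.pi : ℂ) * ∫ t : ℝ, F r k z t :=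
      funext ih
    rw [hfe]
    have hd : HasDerivAt (fun z => (-2 : ℂ) ^ k / (Real.sqrt Real.pi : ℂ) *
        ∫ t : ℝ, F r k z t)
        ((-2 : ℂ) ^ k / (Real.sqrt Real.pi : ℂ) * (-2 * ∫ t : ℝ, F r (k + 1) z t)) z :=
      (hasDeriv_J r k z).const_mul _
    rw [hd.deriv]
    ring

/-- Contour integral representation of the physicists' Hermite polynomial along the
vertical line `Γ_r(t) = r + it`. -/
theorem hermite_contour_integral (k : ℕ) (z : ℂ) (r : ℝ) :
    hermiteH k z =
      (2 ^ k * Complex.exp (z ^ 2) / (Complex.I * Real.sqrt Real.pi)) *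
        ∫ t : ℝ, ((r : ℂ) + t * Complex.I) ^ k *
          Complex.exp (((r : ℂ) + t * Complex.I) ^ 2
            - 2 * z * ((r : ℂ) + t * Complex.I)) * Complex.I := by
  have hpi : (Real.sqrt Real.pi : ℂ) ≠ 0 :=
    Complex.ofReal_ne_zero.mpr (Real.sqrt_ne_zero'.mpr Real.pi_pos)
  have hint : (∫ t : ℝ, ((r : ℂ) + t * Complex.I) ^ k *
      Complex.exp (((r : ℂ) + t * Complex.I) ^ 2
        - 2 * z * ((r : ℂ) + t * Complex.I)) * Complex.I) =
      (∫ t : ℝ, F r k z t) * Complex.I := by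
    rw [← integral_mul_const]
    rfl
  rw [hermiteH, iter_eq r k z, hint]
  have h2 : ((-1 : ℂ)) ^ k * (-2) ^ k = 2 ^ k := by
    rw [← mul_pow]; norm_num
  field_simp
  linear_combination (∫ t : ℝ, F r k z t) * h2
end

section
/- For positive real sequences α_n, β_n, γ_n with β_n/√α_n → ∞, there is a constant C such that |∫_0^∞ e^{-α r^2 - (β + iγ) r} dr - 1/(β + iγ)| ≤ C |β + iγ|^{-1} ((√α/β)^2 + e^{-β/√α}) for all α = α_n, β = β_n, γ = γ_n; in particular ∫_0^∞ e^{-α_n r^2 - (β_n + iγ_n) r} dr = (1 + o(1))/(β_n + iγ_n). -/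
open MeasureTheory Filter

section GaussianDampedAux
open Set

lemma aux_int_rexp (b : ℝ) (hb : 0 < b) :
    IntegrableOn (fun x : ℝ => x * Real.exp (-b * x)) (Ioi 0) := by
  have := integrableOn_rpow_mul_exp_neg_mul_rpow (s := 1) (p := 1) (by norm_num) one_pos hb
  refine this.congr_fun (fun x hx => ?_) measurableSet_Ioi
  simp [Real.rpow_one]

lemma aux_val_rexp (b : ℝ) (hb : 0 < b) :
    ∫ x in Ioi (0:ℝ), x * Real.exp (-b * x) = 1 / b ^ 2 := by
  have := Real.integral_rpow_mul_exp_neg_mul_Ioi (a := 2) (r := b) (by norm_num) hb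
  rw [show ((2:ℝ) - 1) = 1 by norm_num] at this
  simp only [Real.rpow_one, neg_mul] at this ⊢
  rw [this, Real.Gamma_two]
  simp

lemma aux_key (a b c : ℝ) (ha : 0 < a) (hb : 0 < b) :
    ‖(∫ r in Set.Ioi (0 : ℝ), Complex.exp (-(a : ℂ) * (r : ℂ) ^ 2
            - ((b : ℂ) + Complex.I * (c : ℂ)) * (r : ℂ)))
          - 1 / ((b : ℂ) + Complex.I * (c : ℂ))‖
      ≤ 2 * ‖(b : ℂ) + Complex.I * (c : ℂ)‖⁻¹ * (Real.sqrt a / b) ^ 2 := by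
  set z : ℂ := (b : ℂ) + Complex.I * (c : ℂ) with hz
  set g : ℝ → ℂ := fun r => Complex.exp (-(a : ℂ) * (r : ℂ) ^ 2 - z * (r : ℂ)) with hg
  have hb' : b ≤ ‖z‖ := by
    have : z.re = b := by simp [hz]
    calc b = z.re := this.symm
    _ ≤ |z.re| := le_abs_self _
    _ ≤ ‖z‖ := Complex.abs_re_le_norm z
  have hznorm : 0 < ‖z‖ := lt_of_lt_of_le hb hb'
  have hz0 : z ≠ 0 := by simpa using hznorm.ne'
  have hnormg : ∀ r : ℝ, ‖g r‖ = Real.exp (-a * r ^ 2 - b * r) := by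
    intro r
    have harg : (-(a : ℂ) * (r:ℂ) ^ 2 - z * (r:ℂ))
        = ((-a * r ^ 2 - b * r : ℝ) : ℂ) + ((-(c * r) : ℝ) : ℂ) * Complex.I := by
      rw [hz]; push_cast; ring
    rw [hg]
    simp only [harg, Complex.norm_exp, Complex.add_re, Complex.ofReal_re,
      Complex.mul_re, Complex.ofReal_im, Complex.I_re, Complex.I_im]
    ring_nf
  have hgcont : Continuous g := by
    apply Complex.continuous_exp.comp
    fun_prop
  have hint_g : IntegrableOn g (Ioi 0) := by
    apply Integrable.mono' (exp_neg_integrableOn_Ioi 0 hb)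
      (hgcont.aestronglyMeasurable.restrict)
    filter_upwards [ae_restrict_mem measurableSet_Ioi] with r hr
    rw [hnormg r]
    apply Real.exp_le_exp.2
    nlinarith [le_of_lt (Set.mem_Ioi.mp hr), sq_nonneg r]
  have hint_rg : IntegrableOn (fun r : ℝ => (r : ℂ) * g r) (Ioi 0) := by
    apply Integrable.mono' (aux_int_rexp b hb)
      ((Complex.continuous_ofReal.mul hgcont).aestronglyMeasurable.restrict)
    filter_upwards [ae_restrict_mem measurableSet_Ioi] with r hr
    rw [Pi.mul_apply, norm_mul, hnormg r, Complex.norm_real, Real.norm_eq_abs, abs_of_pos hr]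
    apply mul_le_mul_of_nonneg_left _ hr.le
    apply Real.exp_le_exp.2
    nlinarith [le_of_lt (Set.mem_Ioi.mp hr), sq_nonneg r]
  have hderiv : ∀ r : ℝ, HasDerivAt g ((-(2 * a * r : ℝ) - z) * g r) r := by
    intro r
    have hF : HasDerivAt (fun w : ℂ => Complex.exp (-(a : ℂ) * w ^ 2 - z * w))
        ((-(a : ℂ) * (2 * r) - z) * Complex.exp (-(a : ℂ) * (r:ℂ) ^ 2 - z * r)) (r : ℂ) := by
      have h1 : HasDerivAt (fun w : ℂ => -(a : ℂ) * w ^ 2 - z * w)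
          (-(a : ℂ) * (2 * r) - z) (r : ℂ) := by
        have := ((hasDerivAt_pow 2 (r:ℂ)).const_mul (-(a:ℂ))).sub
          ((hasDerivAt_id (r:ℂ)).const_mul z)
        simpa [pow_one, Pi.sub_def] using this
      simpa [mul_comm] using h1.cexp
    have := hF.comp_ofReal
    convert this using 1
    push_cast
    ring
  have hexp : Tendsto (fun r : ℝ => Real.exp (-b * r)) atTop (nhds 0) := by
    have h1 : Tendsto (fun r : ℝ => b * r) atTop atTop := tendsto_id.const_mul_atTop hb
    have := Real.tendsto_exp_neg_atTop_nhds_zero.comp h1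
    simpa [Function.comp_def, neg_mul] using this
  have htend : Tendsto g atTop (nhds 0) := by
    refine squeeze_zero_norm' ?_ hexp
    filter_upwards [eventually_ge_atTop (0:ℝ)] with r hr
    rw [hnormg r]
    apply Real.exp_le_exp.2
    nlinarith [sq_nonneg r]
  clear_value g z
  have key : ∫ r in Ioi (0:ℝ), (-(2 * a * r : ℝ) - z) * g r = 0 - g 0 := by
    apply integral_Ioi_of_hasDerivAt_of_tendsto
      (hgcont.continuousWithinAt) (fun x _ => hderiv x) _ htend
    apply Integrable.congr (((hint_rg.const_mul (-(2*a:ℂ))).sub (hint_g.const_mul z)))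
    filter_upwards with r
    simp only [Pi.sub_apply]
    push_cast
    ring
  have hg0 : g 0 = 1 := by simp [hg]
  -- split the integral
  have hsplit : ∫ r in Ioi (0:ℝ), (-(2 * a * r : ℝ) - z) * g r
      = (-(2*a:ℂ)) * (∫ r in Ioi (0:ℝ), (r:ℂ) * g r) - z * ∫ r in Ioi (0:ℝ), g r := by
    calc ∫ r in Ioi (0:ℝ), (-(2 * a * r : ℝ) - z) * g r
        = ∫ r in Ioi (0:ℝ), ((-(2*a:ℂ)) * ((r:ℂ) * g r) - z * g r) := by
          apply setIntegral_congr_fun measurableSet_Ioi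
          intro r _
          push_cast
          ring
    _ = (∫ r in Ioi (0:ℝ), (-(2*a:ℂ)) * ((r:ℂ) * g r)) - ∫ r in Ioi (0:ℝ), z * g r :=
          integral_sub (hint_rg.const_mul _) (hint_g.const_mul _)
    _ = (-(2*a:ℂ)) * (∫ r in Ioi (0:ℝ), (r:ℂ) * g r) - z * ∫ r in Ioi (0:ℝ), g r := by
          rw [integral_const_mul, integral_const_mul]
  rw [hsplit, hg0] at key
  have hIK : (∫ r in Ioi (0:ℝ), g r) - 1 / z
      = -(2*a:ℂ) * (∫ r in Ioi (0:ℝ), (r:ℂ) * g r) / z := by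
    rw [eq_div_iff hz0, sub_mul, one_div, inv_mul_cancel₀ hz0]
    linear_combination -key
  have hKnorm : ‖∫ r in Ioi (0:ℝ), (r:ℂ) * g r‖ ≤ 1 / b ^ 2 := by
    rw [← aux_val_rexp b hb]
    calc ‖∫ r in Ioi (0:ℝ), (r:ℂ) * g r‖ ≤ ∫ r in Ioi (0:ℝ), ‖(r:ℂ) * g r‖ :=
        norm_integral_le_integral_norm _
    _ ≤ ∫ r in Ioi (0:ℝ), r * Real.exp (-b * r) := by
        apply setIntegral_mono_on hint_rg.norm (aux_int_rexp b hb) measurableSet_Ioi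
        intro r hr
        rw [norm_mul, hnormg r, Complex.norm_real, Real.norm_eq_abs, abs_of_pos hr]
        apply mul_le_mul_of_nonneg_left _ hr.le
        apply Real.exp_le_exp.2
        nlinarith [le_of_lt (Set.mem_Ioi.mp hr), sq_nonneg r]
  rw [hIK, norm_div, norm_mul, norm_neg]
  have h2a : ‖(2*a:ℂ)‖ = 2*a := by
    rw [show ((2*a:ℂ)) = ((2*a:ℝ):ℂ) by push_cast; ring, Complex.norm_real,
      Real.norm_eq_abs, abs_of_pos (by linarith)]
  rw [h2a, div_eq_mul_inv]
  have hsq : (Real.sqrt a / b) ^ 2 = a / b ^ 2 := by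
    rw [div_pow, Real.sq_sqrt ha.le]
  rw [hsq]
  calc 2 * a * ‖∫ r in Ioi (0:ℝ), (r:ℂ) * g r‖ * ‖z‖⁻¹ ≤ 2 * a * (1 / b^2) * ‖z‖⁻¹ := by
        apply mul_le_mul_of_nonneg_right _ (by positivity)
        apply mul_le_mul_of_nonneg_left hKnorm (by positivity)
  _ = 2 * ‖z‖⁻¹ * (a / b ^ 2) := by ring

lemma aux_cancel (t x : ℝ) (ht : t ≠ 0) : t * (2 * t⁻¹ * x) = 2 * x := by
  field_simp


end GaussianDampedAux

/-- Asymptotics of the Gaussian-damped exponential integral: if `β_n/√α_n → ∞` then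
`∫_0^∞ e^{-α_n r² - (β_n + iγ_n) r} dr` is close to `1/(β_n + iγ_n)`, with the explicit
error bound `C‖β_n + iγ_n‖⁻¹ ((√α_n/β_n)² + e^{-β_n/√α_n})`; in particular the integral
equals `(1+o(1))/(β_n + iγ_n)`. -/
theorem gaussian_damped_integral_asymptotics (α β γ : ℕ → ℝ)
    (hα : ∀ n, 0 < α n) (hβ : ∀ n, 0 < β n) (hγ : ∀ n, 0 < γ n)
    (hlim : Tendsto (fun n => β n / Real.sqrt (α n)) atTop atTop) :
    (∃ C : ℝ, ∀ n,
      ‖(∫ r in Set.Ioi (0 : ℝ), Complex.exp (-(α n : ℂ) * (r : ℂ) ^ 2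
            - ((β n : ℂ) + Complex.I * (γ n : ℂ)) * (r : ℂ)))
          - 1 / ((β n : ℂ) + Complex.I * (γ n : ℂ))‖
        ≤ C * ‖(β n : ℂ) + Complex.I * (γ n : ℂ)‖⁻¹ *
            ((Real.sqrt (α n) / β n) ^ 2 + Real.exp (-(β n) / Real.sqrt (α n)))) ∧
    Tendsto (fun n => ((β n : ℂ) + Complex.I * (γ n : ℂ)) *
        ∫ r in Set.Ioi (0 : ℝ), Complex.exp (-(α n : ℂ) * (r : ℂ) ^ 2
            - ((β n : ℂ) + Complex.I * (γ n : ℂ)) * (r : ℂ)))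
      atTop (nhds 1) := by
  open Set in
  have hznorm : ∀ n, 0 < ‖(β n : ℂ) + Complex.I * (γ n : ℂ)‖ := by
    intro n
    have h1 : ((β n : ℂ) + Complex.I * (γ n : ℂ)).re = β n := by simp
    have : β n ≤ ‖(β n : ℂ) + Complex.I * (γ n : ℂ)‖ := by
      calc β n = ((β n : ℂ) + Complex.I * (γ n : ℂ)).re := h1.symm
      _ ≤ |((β n : ℂ) + Complex.I * (γ n : ℂ)).re| := le_abs_self _
      _ ≤ ‖(β n : ℂ) + Complex.I * (γ n : ℂ)‖ := Complex.abs_re_le_norm _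
    linarith [hβ n]
  have hz0 : ∀ n, ((β n : ℂ) + Complex.I * (γ n : ℂ)) ≠ 0 := by
    intro n
    simpa using (hznorm n).ne'
  refine ⟨⟨2, fun n => ?_⟩, ?_⟩
  · calc ‖(∫ r in Set.Ioi (0 : ℝ), Complex.exp (-(α n : ℂ) * (r : ℂ) ^ 2
            - ((β n : ℂ) + Complex.I * (γ n : ℂ)) * (r : ℂ)))
          - 1 / ((β n : ℂ) + Complex.I * (γ n : ℂ))‖
        ≤ 2 * ‖(β n : ℂ) + Complex.I * (γ n : ℂ)‖⁻¹ * (Real.sqrt (α n) / β n) ^ 2 :=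
          aux_key (α n) (β n) (γ n) (hα n) (hβ n)
    _ ≤ 2 * ‖(β n : ℂ) + Complex.I * (γ n : ℂ)‖⁻¹ *
            ((Real.sqrt (α n) / β n) ^ 2 + Real.exp (-(β n) / Real.sqrt (α n))) := by
          apply mul_le_mul_of_nonneg_left _ (by positivity)
          linarith [Real.exp_pos (-(β n) / Real.sqrt (α n))]
  · have hbound : ∀ n, ‖((β n : ℂ) + Complex.I * (γ n : ℂ)) *
        (∫ r in Set.Ioi (0 : ℝ), Complex.exp (-(α n : ℂ) * (r : ℂ) ^ 2
            - ((β n : ℂ) + Complex.I * (γ n : ℂ)) * (r : ℂ))) - 1‖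
        ≤ 2 * (Real.sqrt (α n) / β n) ^ 2 := by
      intro n
      have heq : ((β n : ℂ) + Complex.I * (γ n : ℂ)) *
          (∫ r in Set.Ioi (0 : ℝ), Complex.exp (-(α n : ℂ) * (r : ℂ) ^ 2
            - ((β n : ℂ) + Complex.I * (γ n : ℂ)) * (r : ℂ))) - 1
          = ((β n : ℂ) + Complex.I * (γ n : ℂ)) *
            ((∫ r in Set.Ioi (0 : ℝ), Complex.exp (-(α n : ℂ) * (r : ℂ) ^ 2
              - ((β n : ℂ) + Complex.I * (γ n : ℂ)) * (r : ℂ)))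
              - 1 / ((β n : ℂ) + Complex.I * (γ n : ℂ))) := by
        rw [mul_sub, mul_one_div, div_self (hz0 n)]
      rw [heq, norm_mul]
      calc ‖(β n : ℂ) + Complex.I * (γ n : ℂ)‖ *
            ‖(∫ r in Set.Ioi (0 : ℝ), Complex.exp (-(α n : ℂ) * (r : ℂ) ^ 2
              - ((β n : ℂ) + Complex.I * (γ n : ℂ)) * (r : ℂ)))
              - 1 / ((β n : ℂ) + Complex.I * (γ n : ℂ))‖
          ≤ ‖(β n : ℂ) + Complex.I * (γ n : ℂ)‖ *
            (2 * ‖(β n : ℂ) + Complex.I * (γ n : ℂ)‖⁻¹ * (Real.sqrt (α n) / β n) ^ 2) :=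
            mul_le_mul_of_nonneg_left (aux_key (α n) (β n) (γ n) (hα n) (hβ n))
              (norm_nonneg _)
      _ = 2 * (Real.sqrt (α n) / β n) ^ 2 :=
            aux_cancel _ _ (hznorm n).ne' 
    have h1 : Tendsto (fun n => Real.sqrt (α n) / β n) atTop (nhds 0) := by
      refine hlim.inv_tendsto_atTop.congr fun n => ?_
      simp [Pi.inv_apply, inv_div]
    have hten : Tendsto (fun n => 2 * (Real.sqrt (α n) / β n) ^ 2) atTop (nhds 0) := by
      have := ((h1.mul h1).const_mul (2:ℝ))
      simpa [pow_two] using this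
    rw [tendsto_iff_norm_sub_tendsto_zero]
    exact squeeze_zero (fun n => norm_nonneg _) hbound hten
end

section
/- For any real numbers A > 0, B > 0, C, with ε = B^{1/2} A^{-3/4}, one has |∫_0^∞ e^{-A r^2 - (B+iC) r} dr - 1/(B+iC)| ≤ (1/|B+iC|) (2εA/B + e^{-Aε^2}). -/
open MeasureTheory

open Set Real Filter Topology

/-- Explicit integration-by-parts bound: for `A, B > 0` and `C ∈ ℝ`, with
`ε = B^{1/2} A^{-3/4}`,
`|∫_0^∞ e^{-Ar² - (B+iC)r} dr - 1/(B+iC)| ≤ (1/|B+iC|)(2εA/B + e^{-Aε²})`. -/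
theorem gaussian_damped_integral_bound (A B C : ℝ) (hA : 0 < A) (hB : 0 < B) :
    ‖(∫ r in Set.Ioi (0 : ℝ), Complex.exp (-(A : ℂ) * (r : ℂ) ^ 2
          - ((B : ℂ) + Complex.I * (C : ℂ)) * (r : ℂ)))
        - 1 / ((B : ℂ) + Complex.I * (C : ℂ))‖
      ≤ (1 / ‖(B : ℂ) + Complex.I * (C : ℂ)‖) *
          (2 * (Real.sqrt B * A ^ (-(3 : ℝ) / 4)) * A / B
            + Real.exp (-A * (Real.sqrt B * A ^ (-(3 : ℝ) / 4)) ^ 2)) := by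
  set z : ℂ := (B : ℂ) + Complex.I * (C : ℂ) with hzdef
  set ε : ℝ := Real.sqrt B * A ^ (-(3 : ℝ) / 4) with hedef
  have hε : 0 < ε := mul_pos (Real.sqrt_pos.2 hB) (Real.rpow_pos_of_pos hA _)
  have hzre : z.re = B := by simp [hzdef]
  have hznorm : B ≤ ‖z‖ := by
    calc B = z.re := hzre.symm
    _ ≤ |z.re| := le_abs_self _
    _ ≤ ‖z‖ := Complex.abs_re_le_norm z
  have hznpos : 0 < ‖z‖ := lt_of_lt_of_le hB hznorm
  have hz0 : z ≠ 0 := by intro h; rw [h] at hznpos; simp at hznpos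
  set f : ℝ → ℂ := fun r => Complex.exp (-(A : ℂ) * (r : ℂ) ^ 2 - z * (r : ℂ)) with hfdef
  have hnormf : ∀ r : ℝ, ‖f r‖ = Real.exp (-A * r ^ 2 - B * r) := by
    intro r
    rw [hfdef, Complex.norm_exp]
    have hre : (-(A : ℂ) * (r : ℂ) ^ 2 - z * (r : ℂ)).re = -A * r ^ 2 - B * r := by
      simp [Complex.sub_re, Complex.mul_re, hzre, ← Complex.ofReal_pow]
    rw [hre]
  have hcontf : Continuous f := by fun_prop
  have hintf : IntegrableOn f (Ioi 0) := by
    apply Integrable.mono' ((integrable_exp_neg_mul_sq hA).integrableOn)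
      hcontf.aestronglyMeasurable.restrict
    filter_upwards [ae_restrict_mem measurableSet_Ioi] with r hr
    rw [hnormf]
    exact Real.exp_le_exp.2 (by nlinarith [le_of_lt (show (0:ℝ) < r from hr)])
  have hint_rf : IntegrableOn (fun r : ℝ => (r : ℂ) * f r) (Ioi 0) := by
    apply Integrable.mono' ((integrable_mul_exp_neg_mul_sq hA).norm.integrableOn)
      ((by fun_prop : Continuous fun r : ℝ => (r:ℂ) * f r).aestronglyMeasurable.restrict)
    filter_upwards [ae_restrict_mem measurableSet_Ioi] with r hr
    rw [norm_mul, hnormf, Complex.norm_real, Real.norm_eq_abs, Real.norm_eq_abs,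
      abs_mul, abs_of_pos (Real.exp_pos _)]
    refine mul_le_mul_of_nonneg_left ?_ (abs_nonneg r)
    exact Real.exp_le_exp.2 (by nlinarith [le_of_lt (show (0:ℝ) < r from hr)])
  have hderiv : ∀ r : ℝ, HasDerivAt f ((-(2 * A : ℂ) * (r : ℂ) - z) * f r) r := by
    intro r
    have h0 : HasDerivAt (fun r : ℝ => (r : ℂ)) 1 r := by
      exact Complex.ofRealCLM.hasDerivAt
    have h1 : HasDerivAt (fun r : ℝ => -(A : ℂ) * (r : ℂ) ^ 2 - z * (r : ℂ))
        (-(2 * A : ℂ) * (r : ℂ) - z) r := by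
      have h1' := ((h0.mul h0).const_mul (-(A : ℂ))).sub (h0.const_mul z)
      simp only [pow_two]
      refine h1'.congr_deriv ?_
      ring
    have h2 := h1.cexp
    rw [hfdef]
    convert h2 using 1
    ring
  have hexpBtend : Tendsto (fun r : ℝ => Real.exp (-B * r)) atTop (𝓝 0) :=
    Real.tendsto_exp_atBot.comp (tendsto_id.const_mul_atTop_of_neg (neg_neg_iff_pos.2 hB))
  have htend : Tendsto f atTop (𝓝 0) := by
    rw [tendsto_zero_iff_norm_tendsto_zero]
    refine squeeze_zero' (Eventually.of_forall fun r => norm_nonneg _) ?_ hexpBtend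
    filter_upwards [eventually_ge_atTop (0:ℝ)] with r hr
    rw [hnormf]
    exact Real.exp_le_exp.2 (by nlinarith)
  have hintf' : IntegrableOn (fun r : ℝ => (-(2 * A : ℂ) * (r : ℂ) - z) * f r) (Ioi 0) := by
    have heq : (fun r : ℝ => (-(2 * A : ℂ) * (r : ℂ) - z) * f r)
        = fun r : ℝ => (-(2 * A : ℂ)) * ((r : ℂ) * f r) - z * f r := by
      funext r; ring
    rw [heq]
    exact (hint_rf.const_mul _).sub (hintf.const_mul _)
  have key : ∫ r in Ioi (0:ℝ), (-(2 * A : ℂ) * (r : ℂ) - z) * f r = -1 := by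
    have h := integral_Ioi_of_hasDerivAt_of_tendsto' (fun r _ => hderiv r) hintf' htend
    rw [h, hfdef]
    norm_num
  have split : ∫ r in Ioi (0:ℝ), (-(2 * A : ℂ) * (r : ℂ) - z) * f r
      = (-(2 * A : ℂ)) * (∫ r in Ioi (0:ℝ), (r : ℂ) * f r) - z * ∫ r in Ioi (0:ℝ), f r := by
    rw [← integral_const_mul, ← integral_const_mul,
      ← integral_sub (hint_rf.const_mul _) (hintf.const_mul _)]
    congr 1; funext r; ring
  set J : ℂ := ∫ r in Ioi (0:ℝ), (r : ℂ) * f r with hJ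
  have main_id : (∫ r in Ioi (0:ℝ), f r) - 1 / z = -(2 * A / z) * J := by
    have h1 : (-(2 * A : ℂ)) * J - z * ∫ r in Ioi (0:ℝ), f r = -1 := by rw [← split]; exact key
    field_simp
    linear_combination -h1
  have hJnorm : ‖J‖ ≤ ∫ r in Ioi (0:ℝ), r * Real.exp (-A * r ^ 2 - B * r) := by
    calc ‖J‖ ≤ ∫ r in Ioi (0:ℝ), ‖(r : ℂ) * f r‖ := norm_integral_le_integral_norm _
    _ = ∫ r in Ioi (0:ℝ), r * Real.exp (-A * r ^ 2 - B * r) := by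
        apply setIntegral_congr_fun measurableSet_Ioi
        intro r hr
        show ‖(r : ℂ) * f r‖ = r * Real.exp (-A * r ^ 2 - B * r)
        rw [norm_mul, hnormf, Complex.norm_real, Real.norm_eq_abs, abs_of_pos hr]
  set g : ℝ → ℝ := fun r => r * Real.exp (-A * r ^ 2 - B * r) with hgdef
  have hg_int : IntegrableOn g (Ioi 0) := by
    apply Integrable.mono' ((integrable_mul_exp_neg_mul_sq hA).norm.integrableOn)
      ((by fun_prop : Continuous g).aestronglyMeasurable.restrict)
    filter_upwards [ae_restrict_mem measurableSet_Ioi] with r hr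
    show ‖r * Real.exp (-A * r ^ 2 - B * r)‖ ≤ ‖r * Real.exp (-A * r ^ 2)‖
    rw [Real.norm_eq_abs, Real.norm_eq_abs, abs_mul, abs_mul,
      abs_of_pos (Real.exp_pos _), abs_of_pos (Real.exp_pos _)]
    refine mul_le_mul_of_nonneg_left ?_ (abs_nonneg r)
    exact Real.exp_le_exp.2 (by nlinarith [le_of_lt (show (0:ℝ) < r from hr)])
  have hexp_int : IntegrableOn (fun r : ℝ => Real.exp (-B * r)) (Ioi 0) :=
    exp_neg_integrableOn_Ioi 0 hB
  have hexp_val : ∫ r in Ioi (0:ℝ), Real.exp (-B * r) = 1 / B := by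
    have hd : ∀ r ∈ Ici (0:ℝ), HasDerivAt (fun r : ℝ => -Real.exp (-B * r) / B)
        (Real.exp (-B * r)) r := by
      intro r _
      have := (((hasDerivAt_id r).const_mul (-B)).exp).neg.div_const B
      refine this.congr_deriv ?_
      field_simp
      rfl
    have ht : Tendsto (fun r : ℝ => -Real.exp (-B * r) / B) atTop (𝓝 0) := by
      simpa using hexpBtend.neg.div_const B
    have h := integral_Ioi_of_hasDerivAt_of_tendsto' hd hexp_int ht
    rw [h]
    field_simp
    simp
  have hI1 : ∫ r in Ioc (0:ℝ) ε, g r ≤ ε * (1 / B) := by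
    calc ∫ r in Ioc (0:ℝ) ε, g r ≤ ∫ r in Ioc (0:ℝ) ε, ε * Real.exp (-B * r) := by
          apply setIntegral_mono_on (hg_int.mono_set Ioc_subset_Ioi_self)
            ((hexp_int.mono_set Ioc_subset_Ioi_self).const_mul _) measurableSet_Ioc
          intro r hr
          show r * Real.exp (-A * r ^ 2 - B * r) ≤ ε * Real.exp (-B * r)
          have h1 : Real.exp (-A * r ^ 2 - B * r) ≤ Real.exp (-B * r) :=
            Real.exp_le_exp.2 (by nlinarith [sq_nonneg r])
          exact mul_le_mul hr.2 h1 (Real.exp_pos _).le hε.le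
    _ = ε * ∫ r in Ioc (0:ℝ) ε, Real.exp (-B * r) := integral_const_mul _ _
    _ ≤ ε * ∫ r in Ioi (0:ℝ), Real.exp (-B * r) := by
          refine mul_le_mul_of_nonneg_left ?_ hε.le
          exact setIntegral_mono_set hexp_int
            (Eventually.of_forall fun r => (Real.exp_pos _).le)
            (HasSubset.Subset.eventuallyLE Ioc_subset_Ioi_self)
    _ = ε * (1 / B) := by rw [hexp_val]
  have hI2 : ∫ r in Ioi ε, g r ≤ Real.exp (-A * ε ^ 2) / (2 * A) := by
    have hval : ∫ r in Ioi ε, r * Real.exp (-A * r ^ 2) = Real.exp (-A * ε ^ 2) / (2 * A) := by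
      have hd : ∀ r ∈ Ici ε, HasDerivAt (fun r : ℝ => -Real.exp (-A * r ^ 2) / (2 * A))
          (r * Real.exp (-A * r ^ 2)) r := by
        intro r _
        have := (((hasDerivAt_pow 2 r).const_mul (-A)).exp).neg.div_const (2 * A)
        refine this.congr_deriv ?_
        field_simp [hA.ne', hB.ne', hznpos.ne']
        ring
      have ht : Tendsto (fun r : ℝ => -Real.exp (-A * r ^ 2) / (2 * A)) atTop (𝓝 0) := by
        have h2 : Tendsto (fun r : ℝ => Real.exp (-A * r ^ 2)) atTop (𝓝 0) := by
          apply Real.tendsto_exp_atBot.comp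
          exact (tendsto_pow_atTop two_ne_zero).const_mul_atTop_of_neg (neg_neg_iff_pos.2 hA)
        simpa using h2.neg.div_const (2 * A)
      have h := integral_Ioi_of_hasDerivAt_of_tendsto' hd
        ((integrable_mul_exp_neg_mul_sq hA).integrableOn) ht
      rw [h]
      field_simp
      simp
    calc ∫ r in Ioi ε, g r ≤ ∫ r in Ioi ε, r * Real.exp (-A * r ^ 2) := by
          apply setIntegral_mono_on (hg_int.mono_set (Ioi_subset_Ioi hε.le))
            ((integrable_mul_exp_neg_mul_sq hA).integrableOn) measurableSet_Ioi
          intro r hr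
          have hr0 : 0 < r := lt_trans hε hr
          show r * Real.exp (-A * r ^ 2 - B * r) ≤ r * Real.exp (-A * r ^ 2)
          refine mul_le_mul_of_nonneg_left ?_ hr0.le
          exact Real.exp_le_exp.2 (by nlinarith)
    _ = Real.exp (-A * ε ^ 2) / (2 * A) := hval
  have hsplit : ∫ r in Ioi (0:ℝ), g r = (∫ r in Ioc (0:ℝ) ε, g r) + ∫ r in Ioi ε, g r := by
    rw [← setIntegral_union (Ioc_disjoint_Ioi le_rfl) measurableSet_Ioi
      (hg_int.mono_set Ioc_subset_Ioi_self) (hg_int.mono_set (Ioi_subset_Ioi hε.le)),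
      Ioc_union_Ioi_eq_Ioi hε.le]
  have hItot : ∫ r in Ioi (0:ℝ), g r ≤ ε * (1 / B) + Real.exp (-A * ε ^ 2) / (2 * A) := by
    rw [hsplit]; exact add_le_add hI1 hI2
  rw [main_id, norm_mul]
  have hcoef : ‖-(2 * (A:ℂ) / z)‖ = 2 * A / ‖z‖ := by
    rw [norm_neg, norm_div]
    congr 1
    rw [show (2 * (A:ℂ)) = ((2 * A : ℝ) : ℂ) by push_cast; ring, Complex.norm_real,
      Real.norm_eq_abs, abs_of_pos (by linarith)]
  rw [hcoef]
  calc 2 * A / ‖z‖ * ‖J‖ ≤ 2 * A / ‖z‖ * (ε * (1 / B) + Real.exp (-A * ε ^ 2) / (2 * A)) := by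
        refine mul_le_mul_of_nonneg_left (hJnorm.trans hItot) (by positivity)
  _ = 1 / ‖z‖ * (2 * A * (ε * (1 / B)) + 2 * A * (Real.exp (-A * ε ^ 2) / (2 * A))) := by
        ring
  _ = 1 / ‖z‖ * (2 * ε * A / B + Real.exp (-A * ε ^ 2)) := by
        have hc : 2 * A * (Real.exp (-A * ε ^ 2) / (2 * A)) = Real.exp (-A * ε ^ 2) := by
          rw [mul_comm, div_mul_cancel₀ _ (by positivity : (2 * A) ≠ 0)]
        rw [hc]
        ring
end

section
/- Let X_i, i = 1,…,n, be iid centered real Gaussian random variables with variance 1/2. With c_n = √(log n) - log(4π log n)/(4√(log n)) and a_n = 1/(2√(log n)), the rescaled maximum (max_{1≤i≤n} X_i - c_n)/a_n converges in distribution, as n → ∞, to the Gumbel law F_G(t) = e^{-e^{-t}}. -/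
open MeasureTheory ProbabilityTheory Filter Real Set

lemma tendsto_exp_neg_sq_div : Tendsto (fun x : ℝ => Real.exp (-x^2) / (2*x)) atTop (nhds 0) := by
  have h1 : Tendsto (fun x : ℝ => Real.exp (-x^2)) atTop (nhds 0) := by
    have := Real.tendsto_exp_atBot.comp (tendsto_neg_atBot_iff.mpr (tendsto_pow_atTop (two_ne_zero)))
    exact this
  have h2 : Tendsto (fun x : ℝ => (2*x)⁻¹) atTop (nhds 0) :=
    Tendsto.inv_tendsto_atTop (by exact (tendsto_const_mul_atTop_of_pos two_pos).mpr tendsto_id)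
  simpa [div_eq_mul_inv] using h1.mul h2

-- upper bound FTC
lemma upper_ftc {b : ℝ} (hb : 0 < b) :
    (∫ x in Ioi b, Real.exp (-x^2) * (1 + 1/(2*x^2))) = Real.exp (-b^2) / (2*b) ∧
    IntegrableOn (fun x : ℝ => Real.exp (-x^2) * (1 + 1/(2*x^2))) (Ioi b) := by
  have hderiv : ∀ x ∈ Ici b, HasDerivAt (fun y : ℝ => -(Real.exp (-y^2) / (2*y)))
      (Real.exp (-x^2) * (1 + 1/(2*x^2))) x := by
    intro x hx
    have hx0 : x ≠ 0 := (hb.trans_le hx).ne'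
    have h1 : HasDerivAt (fun y : ℝ => Real.exp (-y^2)) (Real.exp (-x^2) * (-2*x)) x := by
      have : HasDerivAt (fun y : ℝ => -y^2) (-2*x) x := by
        simpa [Pi.neg_def] using ((hasDerivAt_pow 2 x).neg)
      simpa [Function.comp_def] using (Real.hasDerivAt_exp (-x^2)).comp x this
    have h2 : HasDerivAt (fun y : ℝ => 2*y) 2 x := by
      simpa using (hasDerivAt_id x).const_mul 2
    have := (h1.div h2 (by positivity)).neg
    refine this.congr_deriv ?_
    field_simp
    ring
  have htend : Tendsto (fun y : ℝ => -(Real.exp (-y^2) / (2*y))) atTop (nhds 0) := by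
    simpa using tendsto_exp_neg_sq_div.neg
  have hpos : ∀ x ∈ Ioi b, 0 ≤ Real.exp (-x^2) * (1 + 1/(2*x^2)) := by
    intro x hx; have : (0:ℝ) < x := hb.trans hx; positivity
  refine ⟨?_, integrableOn_Ioi_deriv_of_nonneg' hderiv hpos htend⟩
  rw [integral_Ioi_of_hasDerivAt_of_nonneg' hderiv hpos htend]
  ring


lemma tendsto_one_div_const_mul_pow (c : ℝ) (hc : 0 < c) {n : ℕ} (hn : n ≠ 0) :
    Filter.Tendsto (fun x : ℝ => 1/(c*x^n)) Filter.atTop (nhds 0) := by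
  have h : Filter.Tendsto (fun x : ℝ => c*x^n) Filter.atTop Filter.atTop :=
    (Filter.tendsto_const_mul_atTop_of_pos hc).mpr (tendsto_pow_atTop hn)
  have h2 := h.inv_tendsto_atTop
  rw [show (fun x : ℝ => c*x^n)⁻¹ = fun x : ℝ => 1/(c*x^n) by funext x; simp [one_div]] at h2
  exact h2

lemma lower_ftc {b : ℝ} (hb : 1 ≤ b) :
    (∫ x in Ioi b, Real.exp (-x^2) * (1 - 3/(4*x^4)))
      = Real.exp (-b^2) * (1/(2*b) - 1/(4*b^3)) ∧
    IntegrableOn (fun x : ℝ => Real.exp (-x^2) * (1 - 3/(4*x^4))) (Ioi b) := by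
  have hb0 : 0 < b := lt_of_lt_of_le one_pos hb
  have hderiv : ∀ x ∈ Ici b, HasDerivAt
      (fun y : ℝ => -(Real.exp (-y^2) * (1/(2*y) - 1/(4*y^3))))
      (Real.exp (-x^2) * (1 - 3/(4*x^4))) x := by
    intro x hx
    have hx0 : x ≠ 0 := (hb0.trans_le hx).ne'
    have h1 : HasDerivAt (fun y : ℝ => Real.exp (-y^2)) (Real.exp (-x^2) * (-2*x)) x := by
      have : HasDerivAt (fun y : ℝ => -y^2) (-2*x) x := by
        simpa [Pi.neg_def] using ((hasDerivAt_pow 2 x).neg)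
      simpa [Function.comp_def] using (Real.hasDerivAt_exp (-x^2)).comp x this
    have h2 : HasDerivAt (fun y : ℝ => 1/(2*y) - 1/(4*y^3))
        (-(2)/(2*x)^2 - (-(12*x^2)/(4*x^3)^2)) x := by
      have ha : HasDerivAt (fun y : ℝ => 1/(2*y)) (-(2)/(2*x)^2) x := by
        refine ((hasDerivAt_const x (1:ℝ)).div ((hasDerivAt_id x).const_mul 2) (by simpa using hx0)).congr_deriv ?_
        simp
      have hc : HasDerivAt (fun y : ℝ => 4*y^3) (12*x^2) x := by
        have h := (hasDerivAt_pow 3 x).const_mul (4:ℝ)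
        refine h.congr_deriv ?_
        push_cast; ring
      have hbd : HasDerivAt (fun y : ℝ => 1/(4*y^3)) (-(12*x^2)/(4*x^3)^2) x := by
        have := (hasDerivAt_const x (1:ℝ)).div hc (by positivity)
        refine this.congr_deriv ?_
        simp
      exact ha.sub hbd
    have := (h1.mul h2).neg
    refine this.congr_deriv ?_
    field_simp
    ring
  have htend : Tendsto (fun y : ℝ => -(Real.exp (-y^2) * (1/(2*y) - 1/(4*y^3)))) atTop (nhds 0) := by
    have h1 : Tendsto (fun x : ℝ => Real.exp (-x^2)) atTop (nhds 0) :=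
      Real.tendsto_exp_atBot.comp (tendsto_neg_atBot_iff.mpr (tendsto_pow_atTop (two_ne_zero)))
    have h2 : Tendsto (fun x : ℝ => 1/(2*x) - 1/(4*x^3)) atTop (nhds 0) := by
      have ha : Tendsto (fun x : ℝ => 1/(2*x)) atTop (nhds 0) := by
        simpa using tendsto_one_div_const_mul_pow 2 two_pos one_ne_zero
      have hc : Tendsto (fun x : ℝ => 1/(4*x^3)) atTop (nhds 0) :=
        tendsto_one_div_const_mul_pow 4 four_pos three_ne_zero
      simpa using ha.sub hc
    simpa using (h1.mul h2).neg
  have hpos : ∀ x ∈ Ioi b, 0 ≤ Real.exp (-x^2) * (1 - 3/(4*x^4)) := by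
    intro x hx
    have hx1 : (1:ℝ) ≤ x := hb.trans (le_of_lt hx)
    have h4 : (3:ℝ)/(4*x^4) ≤ 1 := by
      rw [div_le_one (by positivity)]
      nlinarith [pow_le_pow_left₀ (by norm_num : (0:ℝ) ≤ 1) hx1 4, one_le_pow₀ hx1 (n := 4)]
    have := sub_nonneg.mpr h4
    positivity
  refine ⟨?_, integrableOn_Ioi_deriv_of_nonneg' hderiv hpos htend⟩
  rw [integral_Ioi_of_hasDerivAt_of_nonneg' hderiv hpos htend]
  ring

lemma tail_bounds {b : ℝ} (hb : 1 ≤ b) :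
    Real.exp (-b^2) * (1/(2*b) - 1/(4*b^3)) ≤ (∫ x in Ioi b, Real.exp (-x^2)) ∧
    (∫ x in Ioi b, Real.exp (-x^2)) ≤ Real.exp (-b^2) / (2*b) := by
  have hb0 : 0 < b := lt_of_lt_of_le one_pos hb
  have hint : IntegrableOn (fun x : ℝ => Real.exp (-x^2)) (Ioi b) := by
    have := (integrable_exp_neg_mul_sq one_pos).integrableOn (s := Ioi b)
    simpa using this
  constructor
  · rw [← (lower_ftc hb).1]
    refine setIntegral_mono_on (lower_ftc hb).2 hint measurableSet_Ioi ?_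
    intro x hx
    have hx1 : (1:ℝ) ≤ x := hb.trans (le_of_lt hx)
    have h4 : (0:ℝ) < 3/(4*x^4) := by positivity
    nlinarith [Real.exp_pos (-x^2)]
  · rw [← (upper_ftc hb0).1]
    refine setIntegral_mono_on hint (upper_ftc hb0).2 measurableSet_Ioi ?_
    intro x hx
    have hx0 : (0:ℝ) < x := hb0.trans hx
    have h4 : (0:ℝ) < 1/(2*x^2) := by positivity
    nlinarith [Real.exp_pos (-x^2)]
noncomputable def Bfun (t : ℝ) (n : ℕ) : ℝ :=
  Real.sqrt (Real.log n) - Real.log (4*π*Real.log n)/(4*Real.sqrt (Real.log n))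
    + t/(2*Real.sqrt (Real.log n))

noncomputable def rfun (t : ℝ) (n : ℕ) : ℝ :=
  (t/2 - Real.log (4*π*Real.log n)/4)/Real.sqrt (Real.log n)

lemma tendsto_sqrt_atTop' : Tendsto Real.sqrt atTop atTop := by
  apply tendsto_atTop_atTop.mpr
  intro b
  refine ⟨(max b 0)^2, fun a ha => ?_⟩
  calc b ≤ max b 0 := le_max_left _ _
  _ = Real.sqrt ((max b 0)^2) := (Real.sqrt_sq (le_max_right _ _)).symm
  _ ≤ Real.sqrt a := Real.sqrt_le_sqrt ha

lemma hL_tendsto : Tendsto (fun n : ℕ => Real.log n) atTop atTop :=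
  Real.tendsto_log_atTop.comp tendsto_natCast_atTop_atTop

lemma hs_tendsto : Tendsto (fun n : ℕ => Real.sqrt (Real.log n)) atTop atTop :=
  tendsto_sqrt_atTop'.comp hL_tendsto

lemma hr_tendsto (t : ℝ) : Tendsto (rfun t) atTop (nhds 0) := by
  have h1 : Tendsto (fun n : ℕ => (t/2 - Real.log (4*π)/4)/Real.sqrt (Real.log n))
      atTop (nhds 0) := tendsto_const_nhds.div_atTop hs_tendsto
  have h2 : Tendsto (fun x : ℝ => Real.log x / x ^ ((1:ℝ)/2)) atTop (nhds 0) :=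
    (isLittleO_log_rpow_atTop one_half_pos).tendsto_div_nhds_zero
  have h3 : Tendsto (fun n : ℕ => Real.log (Real.log n) / Real.sqrt (Real.log n))
      atTop (nhds 0) := by
    have := h2.comp hL_tendsto
    apply this.congr'
    filter_upwards [hL_tendsto.eventually_ge_atTop 0] with n hn
    simp [Function.comp, Real.sqrt_eq_rpow]
  have h4 : Tendsto (fun n : ℕ => Real.log (Real.log n) / Real.sqrt (Real.log n) / 4)
      atTop (nhds 0) := by simpa using h3.div_const 4
  have := h1.sub h4
  rw [sub_zero] at this
  apply this.congr'
  filter_upwards [hL_tendsto.eventually_gt_atTop 0] with n hn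
  have h4π : (0:ℝ) < 4*π := by positivity
  rw [rfun, Real.log_mul (by positivity) hn.ne']
  ring

lemma hB_eq (t : ℝ) {n : ℕ} (hn : 0 < Real.log n) :
    Bfun t n = Real.sqrt (Real.log n) + rfun t n := by
  have hs : Real.sqrt (Real.log n) ≠ 0 := (Real.sqrt_pos.mpr hn).ne'
  rw [Bfun, rfun]
  field_simp
  ring

lemma hB_tendsto (t : ℝ) : Tendsto (Bfun t) atTop atTop := by
  have h := hs_tendsto.atTop_add (hr_tendsto t)
  apply h.congr'
  filter_upwards [hL_tendsto.eventually_gt_atTop 0] with n hn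
  exact (hB_eq t hn).symm

-- key identity
lemma key_identity (t : ℝ) {n : ℕ} (hn : 2 ≤ n) (hL : 0 < Real.log n)
    (hB0 : Bfun t n ≠ 0) :
    (n : ℝ) * ((Real.sqrt π)⁻¹ * (Real.exp (-(Bfun t n)^2) / (2 * Bfun t n)))
      = Real.exp (-t) * Real.exp (-(rfun t n)^2)
          * (Real.sqrt (Real.log n) / (Bfun t n)) := by
  set s := Real.sqrt (Real.log n) with hs
  set r := rfun t n with hr
  have hspos : 0 < s := Real.sqrt_pos.mpr hL
  have hs2 : s^2 = Real.log n := Real.sq_sqrt hL.le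
  have hsr : s * r = t/2 - Real.log (4*π*Real.log n)/4 := by
    rw [hr, rfun]; field_simp; rw [← hs]; ring
  have hB : Bfun t n = s + r := hB_eq t hL
  have h4π : (0:ℝ) < 4*π*Real.log n := by positivity
  have hn0 : (0:ℝ) < n := by positivity
  have hexp : Real.exp (-(Bfun t n)^2)
      = (n:ℝ)⁻¹ * Real.exp (-t) * Real.exp (Real.log (4*π*Real.log n)/2)
        * Real.exp (-r^2) := by
    rw [show ((n:ℝ)⁻¹ = Real.exp (-Real.log n)) by rw [Real.exp_neg, Real.exp_log hn0]]
    rw [← Real.exp_add, ← Real.exp_add, ← Real.exp_add, hB]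
    congr 1
    have : (s+r)^2 = s^2 + 2*(s*r) + r^2 := by ring
    rw [this, hs2, hsr]
    ring
  have hsq : Real.exp (Real.log (4*π*Real.log n)/2) = 2 * Real.sqrt π * s := by
    rw [show Real.log (4*π*Real.log n)/2 = Real.log (4*π*Real.log n) * (1/2) by ring]
    rw [← Real.rpow_def_of_pos h4π, ← Real.sqrt_eq_rpow, hs]
    rw [show 4*π*Real.log n = 2^2 * (π * Real.log n) by ring]
    rw [Real.sqrt_mul (by positivity), Real.sqrt_sq (by norm_num : (0:ℝ) ≤ 2),
      Real.sqrt_mul Real.pi_pos.le]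
    ring
  have hπ : (0:ℝ) < Real.sqrt π := Real.sqrt_pos.mpr Real.pi_pos
  rw [hexp, hsq]
  field_simp

lemma hU_tendsto (t : ℝ) :
    Tendsto (fun n : ℕ => Real.exp (-t) * Real.exp (-(rfun t n)^2)
      * (Real.sqrt (Real.log n) / Bfun t n)) atTop (nhds (Real.exp (-t))) := by
  have h1 : Tendsto (fun n : ℕ => Real.exp (-(rfun t n)^2)) atTop (nhds 1) := by
    have : Tendsto (fun n : ℕ => -(rfun t n)^2) atTop (nhds 0) := by
      simpa using (((hr_tendsto t).pow 2).neg)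
    simpa [Function.comp_def] using (Real.continuous_exp.continuousAt.tendsto.comp this)
  have h2 : Tendsto (fun n : ℕ => Real.sqrt (Real.log n) / Bfun t n) atTop (nhds 1) := by
    have hq : Tendsto (fun n : ℕ => rfun t n / Real.sqrt (Real.log n)) atTop (nhds 0) :=
      (hr_tendsto t).div_atTop hs_tendsto
    have h3 : Tendsto (fun n : ℕ => (1 + rfun t n / Real.sqrt (Real.log n))⁻¹) atTop (nhds 1) := by
      have := ((tendsto_const_nhds (x := (1:ℝ))).add hq).inv₀ (by norm_num)
      simpa using this
    apply h3.congr'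
    filter_upwards [hL_tendsto.eventually_gt_atTop 0,
      (hB_tendsto t).eventually_gt_atTop 0] with n hLn hBn
    have hs0 : 0 < Real.sqrt (Real.log n) := Real.sqrt_pos.mpr hLn
    rw [hB_eq t hLn] at hBn ⊢
    rw [eq_div_iff (by positivity)]
    field_simp
  have := (tendsto_const_nhds (x := Real.exp (-t))).mul (h1.mul h2)
  simpa [mul_assoc] using this

lemma key_tendsto (t : ℝ) :
    Tendsto (fun n : ℕ => (n:ℝ) * ((Real.sqrt π)⁻¹ * ∫ x in Ioi (Bfun t n), Real.exp (-x^2)))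
      atTop (nhds (Real.exp (-t))) := by
  have hBatTop := hB_tendsto t
  set U := fun n : ℕ => Real.exp (-t) * Real.exp (-(rfun t n)^2)
      * (Real.sqrt (Real.log n) / Bfun t n) with hU
  have hupper : ∀ᶠ n : ℕ in atTop,
      (n:ℝ) * ((Real.sqrt π)⁻¹ * ∫ x in Ioi (Bfun t n), Real.exp (-x^2)) ≤ U n := by
    filter_upwards [hBatTop.eventually_ge_atTop 1, hL_tendsto.eventually_gt_atTop 0,
      eventually_ge_atTop 2] with n hB1 hLn hn2
    have hB0 : (0:ℝ) < Bfun t n := lt_of_lt_of_le one_pos hB1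
    have h := (tail_bounds hB1).2
    have hπ : (0:ℝ) < Real.sqrt π := Real.sqrt_pos.mpr Real.pi_pos
    have hn0 : (0:ℝ) ≤ n := Nat.cast_nonneg n
    calc (n:ℝ) * ((Real.sqrt π)⁻¹ * ∫ x in Ioi (Bfun t n), Real.exp (-x^2))
        ≤ (n:ℝ) * ((Real.sqrt π)⁻¹ * (Real.exp (-(Bfun t n)^2) / (2 * Bfun t n))) := by
          exact mul_le_mul_of_nonneg_left
            (mul_le_mul_of_nonneg_left h (by positivity)) hn0
      _ = U n := key_identity t hn2 hLn hB0.ne'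
  have hlower : ∀ᶠ n : ℕ in atTop,
      U n * (1 - 1/(2*(Bfun t n)^2)) ≤
        (n:ℝ) * ((Real.sqrt π)⁻¹ * ∫ x in Ioi (Bfun t n), Real.exp (-x^2)) := by
    filter_upwards [hBatTop.eventually_ge_atTop 1, hL_tendsto.eventually_gt_atTop 0,
      eventually_ge_atTop 2] with n hB1 hLn hn2
    have hB0 : (0:ℝ) < Bfun t n := lt_of_lt_of_le one_pos hB1
    have h := (tail_bounds hB1).1
    have hπ : (0:ℝ) < Real.sqrt π := Real.sqrt_pos.mpr Real.pi_pos
    have hn0 : (0:ℝ) ≤ n := Nat.cast_nonneg n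
    have hid := key_identity t hn2 hLn hB0.ne'
    have hfact : Real.exp (-(Bfun t n)^2) * (1/(2*Bfun t n) - 1/(4*(Bfun t n)^3))
        = (Real.exp (-(Bfun t n)^2) / (2 * Bfun t n)) * (1 - 1/(2*(Bfun t n)^2)) := by
      field_simp
      ring
    have heq : U n * (1 - 1/(2*(Bfun t n)^2))
        = (n:ℝ) * ((Real.sqrt π)⁻¹
            * (Real.exp (-(Bfun t n)^2) * (1/(2*Bfun t n) - 1/(4*(Bfun t n)^3)))) := by
      rw [hfact, show (n:ℝ) * ((Real.sqrt π)⁻¹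
          * ((Real.exp (-(Bfun t n)^2) / (2 * Bfun t n)) * (1 - 1/(2*(Bfun t n)^2))))
          = ((n:ℝ) * ((Real.sqrt π)⁻¹ * (Real.exp (-(Bfun t n)^2) / (2 * Bfun t n))))
            * (1 - 1/(2*(Bfun t n)^2)) from by ring, hid]
    rw [heq]
    exact mul_le_mul_of_nonneg_left (mul_le_mul_of_nonneg_left h (by positivity)) hn0
  have hUlim : Tendsto U atTop (nhds (Real.exp (-t))) := hU_tendsto t
  have hlowlim : Tendsto (fun n : ℕ => U n * (1 - 1/(2*(Bfun t n)^2))) atTop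
      (nhds (Real.exp (-t))) := by
    have h2B : Tendsto (fun n : ℕ => 2*(Bfun t n)^2) atTop atTop :=
      (tendsto_const_mul_atTop_of_pos two_pos).mpr
        ((tendsto_pow_atTop two_ne_zero).comp hBatTop)
    have hinv : Tendsto (fun n : ℕ => 1/(2*(Bfun t n)^2)) atTop (nhds 0) := by
      have h2 := h2B.inv_tendsto_atTop
      rw [show (fun n : ℕ => 2*(Bfun t n)^2)⁻¹ = fun n : ℕ => 1/(2*(Bfun t n)^2) by
        funext n; simp [one_div]] at h2
      exact h2
    have hb2 : Tendsto (fun n : ℕ => 1 - 1/(2*(Bfun t n)^2)) atTop (nhds 1) := by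
      simpa using (tendsto_const_nhds (x := (1:ℝ))).sub hinv
    simpa using hUlim.mul hb2
  exact tendsto_of_tendsto_of_tendsto_of_le_of_le' hlowlim hUlim hlower hupper
open MeasureTheory ProbabilityTheory Filter Real Set

lemma gauss_Ioi_toReal (b : ℝ) :
    (gaussianReal 0 (1/2 : NNReal) (Ioi b)).toReal
      = (Real.sqrt π)⁻¹ * ∫ x in Ioi b, Real.exp (-x^2) := by
  have hv : (1/2 : NNReal) ≠ 0 := by norm_num
  rw [gaussianReal_apply_eq_integral 0 hv (Ioi b)]
  rw [ENNReal.toReal_ofReal (by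
    apply setIntegral_nonneg measurableSet_Ioi
    intro x _; exact gaussianPDFReal_nonneg 0 _ x)]
  rw [← integral_const_mul]
  apply setIntegral_congr_fun measurableSet_Ioi
  intro x _
  rw [gaussianPDFReal]
  have h2 : ((1/2 : NNReal) : ℝ) = 1/2 := by norm_num
  rw [h2, show (2:ℝ)*π*(1/2) = π by ring]
  norm_num

lemma gauss_Iic_toReal (b : ℝ) :
    (gaussianReal 0 (1/2 : NNReal) (Iic b)).toReal
      = 1 - (Real.sqrt π)⁻¹ * ∫ x in Ioi b, Real.exp (-x^2) := by
  have h := measure_add_measure_compl (μ := gaussianReal 0 (1/2 : NNReal))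
    (measurableSet_Iic (a := b))
  rw [compl_Iic, measure_univ] at h
  have h1 : (gaussianReal 0 (1/2 : NNReal) (Iic b)).toReal
      + (gaussianReal 0 (1/2 : NNReal) (Ioi b)).toReal = 1 := by
    rw [← ENNReal.toReal_add (measure_ne_top _ _) (measure_ne_top _ _), h]
    simp
  rw [← gauss_Ioi_toReal]
  linarith

lemma pow_limit {v : ℕ → ℝ} {c : ℝ} (hv0 : ∀ᶠ n in atTop, 0 < v n)
    (hv1 : ∀ᶠ n in atTop, v n < 1)
    (hnv : Tendsto (fun n : ℕ => (n:ℝ) * v n) atTop (nhds c)) :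
    Tendsto (fun n : ℕ => (1 - v n)^n) atTop (nhds (Real.exp (-c))) := by
  have hvlim : Tendsto v atTop (nhds 0) := by
    have hinv : Tendsto (fun n : ℕ => ((n:ℝ))⁻¹) atTop (nhds 0) :=
      tendsto_inv_atTop_zero.comp tendsto_natCast_atTop_atTop
    have := hnv.mul hinv
    rw [mul_zero] at this
    apply this.congr'
    filter_upwards [eventually_ge_atTop 1] with n hn
    have : (n:ℝ) ≠ 0 := by positivity
    field_simp
  -- slope of log at 1
  have hslope : Tendsto (fun n : ℕ => Real.log (1 - v n) / (-(v n))) atTop (nhds 1) := by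
    have hd : Tendsto (slope Real.log 1) (nhdsWithin 1 {(1:ℝ)}ᶜ) (nhds 1) := by
      have := hasDerivAt_iff_tendsto_slope.mp (Real.hasDerivAt_log one_ne_zero)
      simpa using this
    have hy : Tendsto (fun n : ℕ => 1 - v n) atTop (nhdsWithin 1 {(1:ℝ)}ᶜ) := by
      rw [tendsto_nhdsWithin_iff]
      constructor
      · simpa using (tendsto_const_nhds (x := (1:ℝ))).sub hvlim
      · filter_upwards [hv0] with n hn
        simp only [mem_compl_iff, mem_singleton_iff]
        intro h
        nlinarith
    have := hd.comp hy
    apply this.congr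
    intro n
    simp only [Function.comp_apply, slope_def_field, Real.log_one, sub_zero]
    congr 1
    ring
  have hmain : Tendsto (fun n : ℕ => (n:ℝ) * Real.log (1 - v n)) atTop (nhds (-c)) := by
    have := (hnv.neg).mul hslope
    rw [mul_one] at this
    apply this.congr'
    filter_upwards [hv0] with n hn
    have hvne : v n ≠ 0 := hn.ne'
    field_simp
  have hexp := (Real.continuous_exp.continuousAt.tendsto.comp hmain)
  apply hexp.congr'
  filter_upwards [hv0, hv1] with n hn0 hn1
  have hpos : 0 < 1 - v n := by linarith
  simp only [Function.comp]
  rw [Real.exp_nat_mul, Real.exp_log hpos]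
section FinalPieces
open MeasureTheory ProbabilityTheory Filter Real Set

lemma prob_sup_eq {Ω : Type*} [MeasureSpace Ω] [IsProbabilityMeasure (ℙ : Measure Ω)]
    (X : ℕ → Ω → ℝ) (hmeas : ∀ i, Measurable (X i))
    (hindep : iIndepFun X ℙ)
    (hdist : ∀ i, Measure.map (X i) ℙ = gaussianReal 0 (1 / 2 : NNReal))
    {n : ℕ} (hn : 1 ≤ n) (B : ℝ) :
    (ℙ {ω | (⨆ i : Fin n, X i ω) ≤ B}).toReal
      = ((gaussianReal 0 (1/2 : NNReal) (Iic B)).toReal)^n := by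
  haveI hne : Nonempty (Fin n) := Fin.pos_iff_nonempty.mp hn
  have hset : {ω | (⨆ i : Fin n, X i ω) ≤ B} = ⋂ i ∈ Finset.range n, X i ⁻¹' Iic B := by
    ext ω
    simp only [mem_setOf_eq, Set.mem_iInter, mem_preimage, mem_Iic, Finset.mem_range]
    rw [ciSup_le_iff (Set.Finite.bddAbove (Set.finite_range _))]
    constructor
    · intro h i hi; exact h ⟨i, hi⟩
    · intro h i; exact h i i.2
  rw [hset, hindep.meas_biInter (fun i _ => ⟨Iic B, measurableSet_Iic, rfl⟩)]
  have hfac : ∀ i, ℙ (X i ⁻¹' Iic B) = gaussianReal 0 (1/2 : NNReal) (Iic B) := by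
    intro i
    rw [← Measure.map_apply (hmeas i) measurableSet_Iic, hdist i]
  rw [Finset.prod_congr rfl (fun i _ => hfac i), Finset.prod_const, Finset.card_range,
    ENNReal.toReal_pow]

end FinalPieces

open MeasureTheory ProbabilityTheory Filter

/-- Classical extreme value theorem for iid `N(0,1/2)` Gaussians: with
`c_n = √(log n) - log(4π log n)/(4√(log n))` and `a_n = 1/(2√(log n))`, the rescaled
maximum `(max_{i<n} X_i - c_n)/a_n` converges in distribution to the Gumbel law. -/
theorem gaussian_max_gumbel (Ω : Type*) [MeasureSpace Ω]
    [IsProbabilityMeasure (ℙ : Measure Ω)]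
    (X : ℕ → Ω → ℝ) (hmeas : ∀ i, Measurable (X i))
    (hindep : iIndepFun X ℙ)
    (hdist : ∀ i, Measure.map (X i) ℙ = gaussianReal 0 (1 / 2 : NNReal)) (t : ℝ) :
    Tendsto (fun n : ℕ =>
        (ℙ {ω | ((⨆ i : Fin n, X i ω) -
              (Real.sqrt (Real.log n) -
                Real.log (4 * Real.pi * Real.log n) / (4 * Real.sqrt (Real.log n)))) /
            (1 / (2 * Real.sqrt (Real.log n))) ≤ t}).toReal)
      atTop (nhds (Real.exp (-Real.exp (-t)))) := by
  classical
  set v := fun n : ℕ => (Real.sqrt Real.pi)⁻¹ * ∫ x in Set.Ioi (Bfun t n), Real.exp (-x^2)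
    with hv
  have hkey : Tendsto (fun n : ℕ => (n:ℝ) * v n) atTop (nhds (Real.exp (-t))) := key_tendsto t
  have hπ : (0:ℝ) < Real.sqrt Real.pi := Real.sqrt_pos.mpr Real.pi_pos
  have hv0 : ∀ᶠ n : ℕ in atTop, 0 < v n := by
    filter_upwards [(hB_tendsto t).eventually_ge_atTop 1] with n hB1
    have hB0 : (0:ℝ) < Bfun t n := lt_of_lt_of_le one_pos hB1
    have hl := (tail_bounds hB1).1
    have hp : 0 < Real.exp (-(Bfun t n)^2) * (1/(2*Bfun t n) - 1/(4*(Bfun t n)^3)) := by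
      apply mul_pos (Real.exp_pos _)
      rw [sub_pos, div_lt_div_iff₀ (by positivity) (by positivity)]
      nlinarith
    exact mul_pos (inv_pos.mpr hπ) (lt_of_lt_of_le hp hl)
  have hvlim : Tendsto v atTop (nhds 0) := by
    have hinv : Tendsto (fun n : ℕ => ((n:ℝ))⁻¹) atTop (nhds 0) :=
      tendsto_inv_atTop_zero.comp tendsto_natCast_atTop_atTop
    have h := hkey.mul hinv
    rw [mul_zero] at h
    apply h.congr'
    filter_upwards [eventually_ge_atTop 1] with n hn
    have hn0 : (n:ℝ) ≠ 0 := by positivity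
    field_simp
  have hv1 : ∀ᶠ n : ℕ in atTop, v n < 1 := hvlim.eventually_lt_const one_pos
  have hpow := pow_limit hv0 hv1 hkey
  apply hpow.congr'
  filter_upwards [eventually_ge_atTop 2, hL_tendsto.eventually_gt_atTop 0] with n hn2 hLn
  have hs0 : 0 < Real.sqrt (Real.log n) := Real.sqrt_pos.mpr hLn
  have ha : 0 < 1/(2*Real.sqrt (Real.log n)) := by positivity
  have hsetEq : {ω | ((⨆ i : Fin n, X i ω) -
              (Real.sqrt (Real.log n) -
                Real.log (4 * Real.pi * Real.log n) / (4 * Real.sqrt (Real.log n)))) /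
            (1 / (2 * Real.sqrt (Real.log n))) ≤ t}
      = {ω | (⨆ i : Fin n, X i ω) ≤ Bfun t n} := by
    ext ω
    simp only [Set.mem_setOf_eq]
    rw [div_le_iff₀ ha, sub_le_iff_le_add, Bfun]
    have heq : t * (1/(2*Real.sqrt (Real.log n))) = t/(2*Real.sqrt (Real.log n)) := by
      rw [mul_one_div]
    constructor <;> intro h <;> linarith
  rw [hsetEq, prob_sup_eq X hmeas hindep hdist (by omega) (Bfun t n), gauss_Iic_toReal]
end

section
/- For every σ ≥ 0 and every (ξ, η) ∈ ℝ², the diagonal of the interpolating kernel satisfies the bound M_σ(ζ, ζ) ≤ exp{δ²σ² + (2/3)δ³ - 2δη²/(σ² + 2δ) - 2δξ} / (4π^{3/2} δ (σ² + 2δ)) for every δ > 0, where M_σ(ζ₁,ζ₂) = (1/(4π^{5/2})) ∫_{γ₁}∫_{γ₂} e^{-(1/2)(σv - η₂)² + (i/3)v³ + iξ₂ v - (1/2)(σu + η₁)² + (i/3)u³ + iξ₁ u} / (i(u+v)) du dv with γ_j(t) = t + iδ. -/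
open MeasureTheory

lemma gauss_int (a c : ℝ) (ha : 0 < a) :
    ∫ t : ℝ, Real.exp (-(a/2) * t^2 + c*t)
      = Real.sqrt (2*Real.pi/a) * Real.exp (c^2/(2*a)) := by
  have key : ∀ t : ℝ, Real.exp (-(a/2) * t^2 + c*t)
      = Real.exp (-(a/2) * (t - c/a)^2) * Real.exp (c^2/(2*a)) := by
    intro t; rw [← Real.exp_add]; congr 1; field_simp; ring
  simp only [key]
  rw [integral_mul_const, integral_sub_right_eq_self (fun t => Real.exp (-(a/2) * t^2)) (c/a),
    integral_gaussian]
  congr 2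
  rw [div_div_eq_mul_div]; ring

lemma gauss_integrable (a c : ℝ) (ha : 0 < a) :
    Integrable (fun t : ℝ => Real.exp (-(a/2) * t^2 + c*t)) := by
  have key : ∀ t : ℝ, Real.exp (-(a/2) * t^2 + c*t)
      = Real.exp (-(a/2) * (t - c/a)^2) * Real.exp (c^2/(2*a)) := by
    intro t; rw [← Real.exp_add]; congr 1; field_simp; ring
  simp only [key]
  exact (((integrable_exp_neg_mul_sq (by linarith : (0:ℝ) < a/2)).comp_sub_right
    (c/a)).mul_const _)

/-- Bound on the diagonal of the interpolating kernel `M_σ`: for every `δ > 0`,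
`M_σ(ζ,ζ) ≤ exp{δ²σ² + (2/3)δ³ - 2δη²/(σ²+2δ) - 2δξ}/(4π^{3/2}δ(σ²+2δ))`, where `M_σ` is
given by the double contour integral along the horizontal contours at height `δ`. -/
theorem interpolating_kernel_diagonal_bound (σ : ℝ) (hσ : 0 ≤ σ) (ξ η : ℝ)
    (δ : ℝ) (hδ : 0 < δ) :
    ‖((1 / (4 * Real.pi ^ ((5 : ℝ) / 2)) : ℝ) : ℂ) *
        ∫ s : ℝ, ∫ t : ℝ,
          Complex.exp (-(1 / 2 : ℂ) * ((σ : ℂ) * ((t : ℂ) + Complex.I * δ) - η) ^ 2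
              + (Complex.I / 3) * ((t : ℂ) + Complex.I * δ) ^ 3
              + Complex.I * ξ * ((t : ℂ) + Complex.I * δ)
              - (1 / 2 : ℂ) * ((σ : ℂ) * ((s : ℂ) + Complex.I * δ) + η) ^ 2
              + (Complex.I / 3) * ((s : ℂ) + Complex.I * δ) ^ 3
              + Complex.I * ξ * ((s : ℂ) + Complex.I * δ))
            / (Complex.I * (((s : ℂ) + Complex.I * δ) + ((t : ℂ) + Complex.I * δ)))‖
      ≤ Real.exp (δ ^ 2 * σ ^ 2 + (2 / 3) * δ ^ 3 - 2 * δ * η ^ 2 / (σ ^ 2 + 2 * δ)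
            - 2 * δ * ξ)
          / (4 * Real.pi ^ ((3 : ℝ) / 2) * δ * (σ ^ 2 + 2 * δ)) := by
  set a : ℝ := σ^2 + 2*δ with ha_def
  have ha : 0 < a := by positivity
  set K : ℝ := -η^2 + δ^2*σ^2 + (2/3)*δ^3 - 2*δ*ξ with hK_def
  set G : ℝ → ℝ := fun t => Real.exp (-(a/2) * t^2 + (σ*η)*t) with hG_def
  set H : ℝ → ℝ := fun s => Real.exp (-(a/2) * s^2 + (-(σ*η))*s) with hH_def
  set f : ℝ → ℝ → ℂ := fun s t =>
          Complex.exp (-(1 / 2 : ℂ) * ((σ : ℂ) * ((t : ℂ) + Complex.I * δ) - η) ^ 2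
              + (Complex.I / 3) * ((t : ℂ) + Complex.I * δ) ^ 3
              + Complex.I * ξ * ((t : ℂ) + Complex.I * δ)
              - (1 / 2 : ℂ) * ((σ : ℂ) * ((s : ℂ) + Complex.I * δ) + η) ^ 2
              + (Complex.I / 3) * ((s : ℂ) + Complex.I * δ) ^ 3
              + Complex.I * ξ * ((s : ℂ) + Complex.I * δ))
            / (Complex.I * (((s : ℂ) + Complex.I * δ) + ((t : ℂ) + Complex.I * δ))) with hf_def
  -- pointwise bound
  have hpt : ∀ s t : ℝ, ‖f s t‖ ≤ (Real.exp K / (2*δ)) * G t * H s := by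
    intro s t
    rw [hf_def]
    simp only [norm_div]
    have hre : (-(1 / 2 : ℂ) * ((σ : ℂ) * ((t : ℂ) + Complex.I * δ) - η) ^ 2
              + (Complex.I / 3) * ((t : ℂ) + Complex.I * δ) ^ 3
              + Complex.I * ξ * ((t : ℂ) + Complex.I * δ)
              - (1 / 2 : ℂ) * ((σ : ℂ) * ((s : ℂ) + Complex.I * δ) + η) ^ 2
              + (Complex.I / 3) * ((s : ℂ) + Complex.I * δ) ^ 3
              + Complex.I * ξ * ((s : ℂ) + Complex.I * δ)).re
        = (-(a/2) * t^2 + (σ*η)*t) + (-(a/2) * s^2 + (-(σ*η))*s) + K := by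
      simp only [hK_def, ha_def, pow_succ, pow_zero, one_mul, Complex.add_re, Complex.sub_re,
        Complex.neg_re, Complex.mul_re, Complex.mul_im, Complex.add_im, Complex.sub_im,
        Complex.neg_im, Complex.I_re, Complex.I_im, Complex.ofReal_re, Complex.ofReal_im,
        Complex.div_re, Complex.div_im, Complex.normSq_apply, Complex.one_re, Complex.one_im,
        Complex.re_ofNat, Complex.im_ofNat]
      norm_num
      ring
    rw [Complex.norm_exp, hre]
    have hden : (2*δ) ≤ ‖Complex.I * (((s : ℂ) + Complex.I * δ) + ((t : ℂ) + Complex.I * δ))‖ := by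
      rw [norm_mul, Complex.norm_I, one_mul]
      calc (2*δ) = |(((s : ℂ) + Complex.I * δ) + ((t : ℂ) + Complex.I * δ)).im| := by
            simp only [Complex.add_im, Complex.mul_im, Complex.I_re, Complex.I_im,
              Complex.ofReal_re, Complex.ofReal_im]
            rw [abs_of_pos (by linarith)]
            ring
        _ ≤ _ := Complex.abs_im_le_norm _
    have h2δ : (0:ℝ) < 2*δ := by linarith
    calc Real.exp ((-(a/2) * t^2 + (σ*η)*t) + (-(a/2) * s^2 + (-(σ*η))*s) + K)
          / ‖Complex.I * (((s : ℂ) + Complex.I * δ) + ((t : ℂ) + Complex.I * δ))‖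
        ≤ Real.exp ((-(a/2) * t^2 + (σ*η)*t) + (-(a/2) * s^2 + (-(σ*η))*s) + K) / (2*δ) := by
          apply div_le_div_of_nonneg_left (Real.exp_pos _).le h2δ hden
      _ = (Real.exp K / (2*δ)) * G t * H s := by
          rw [hG_def, hH_def]
          simp only [← Real.exp_add]
          rw [div_mul_eq_mul_div, div_mul_eq_mul_div, ← Real.exp_add, ← Real.exp_add]
          ring_nf
  -- integrals of the Gaussian bounds
  set B : ℝ := Real.exp K / (2*δ) with hB_def
  set Ig : ℝ := Real.sqrt (2*Real.pi/a) * Real.exp ((σ*η)^2/(2*a)) with hIg_def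
  have hGint : Integrable G := gauss_integrable a (σ*η) ha
  have hHint : Integrable H := gauss_integrable a (-(σ*η)) ha
  have hGval : ∫ t : ℝ, G t = Ig := gauss_int a (σ*η) ha
  have hHval : ∫ s : ℝ, H s = Ig := by
    rw [hH_def, gauss_int a (-(σ*η)) ha, hIg_def, neg_sq]
  have hB : 0 < B := by positivity
  have hIg : 0 < Ig := by positivity
  -- inner bound
  have hinner : ∀ s : ℝ, ‖∫ t : ℝ, f s t‖ ≤ (B * Ig) * H s := by
    intro s
    calc ‖∫ t : ℝ, f s t‖ ≤ ∫ t : ℝ, ‖f s t‖ := norm_integral_le_integral_norm _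
      _ ≤ ∫ t : ℝ, (B * H s) * G t := by
          refine integral_mono_of_nonneg (Filter.Eventually.of_forall fun t => norm_nonneg _)
            (hGint.const_mul _) (Filter.Eventually.of_forall fun t => ?_)
          exact le_of_le_of_eq (hpt s t) (by ring)
      _ = (B * H s) * Ig := by rw [integral_const_mul, hGval]
      _ = (B * Ig) * H s := by ring
  -- outer bound
  have houter : ‖∫ s : ℝ, ∫ t : ℝ, f s t‖ ≤ B * Ig * Ig := by
    calc ‖∫ s : ℝ, ∫ t : ℝ, f s t‖ ≤ ∫ s : ℝ, ‖∫ t : ℝ, f s t‖ :=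
          norm_integral_le_integral_norm _
      _ ≤ ∫ s : ℝ, (B * Ig) * H s := by
          refine integral_mono_of_nonneg (Filter.Eventually.of_forall fun s => norm_nonneg _)
            (hHint.const_mul _) (Filter.Eventually.of_forall fun s => hinner s)
      _ = (B * Ig) * Ig := by rw [integral_const_mul, hHval]
      _ = B * Ig * Ig := by ring
  -- combine
  have hpi : (0:ℝ) < Real.pi := Real.pi_pos
  have hpow52 : Real.pi ^ ((5:ℝ)/2) = Real.pi ^ ((3:ℝ)/2) * Real.pi := by
    have h : ((5:ℝ)/2) = (3:ℝ)/2 + 1 := by norm_num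
    rw [h, Real.rpow_add hpi, Real.rpow_one]
  have hpow32 : (0:ℝ) < Real.pi ^ ((3:ℝ)/2) := Real.rpow_pos_of_pos hpi _
  have hc0 : ‖((1 / (4 * Real.pi ^ ((5 : ℝ) / 2)) : ℝ) : ℂ)‖
      = 1 / (4 * Real.pi ^ ((5 : ℝ) / 2)) := by
    rw [Complex.norm_real, Real.norm_eq_abs, abs_of_pos]
    positivity
  rw [norm_mul, hc0]
  have hfinal : (1 / (4 * Real.pi ^ ((5 : ℝ) / 2))) * (B * Ig * Ig)
      = Real.exp (δ ^ 2 * σ ^ 2 + (2 / 3) * δ ^ 3 - 2 * δ * η ^ 2 / a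
            - 2 * δ * ξ) / (4 * Real.pi ^ ((3 : ℝ) / 2) * δ * a) := by
    have hIg2 : Ig * Ig = (2*Real.pi/a) * Real.exp ((σ*η)^2/a) := by
      rw [hIg_def]
      have : Real.sqrt (2*Real.pi/a) * Real.sqrt (2*Real.pi/a) = 2*Real.pi/a :=
        Real.mul_self_sqrt (by positivity)
      rw [mul_mul_mul_comm, this, ← Real.exp_add]
      congr 1
      field_simp
      ring
    have hexp : Real.exp K * Real.exp ((σ*η)^2/a)
        = Real.exp (δ ^ 2 * σ ^ 2 + (2 / 3) * δ ^ 3 - 2 * δ * η ^ 2 / a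
            - 2 * δ * ξ) := by
      rw [← Real.exp_add]
      congr 1
      rw [hK_def]
      rw [ha_def] at ha ⊢
      field_simp
      ring
    rw [mul_assoc, hIg2, hB_def, hpow52, ← hexp]
    have hδ' : δ ≠ 0 := ne_of_gt hδ
    have ha' : a ≠ 0 := ne_of_gt ha
    have hπ' : Real.pi ^ ((3:ℝ)/2) ≠ 0 := ne_of_gt hpow32
    field_simp
  rw [← hfinal]
  have h0 : (0:ℝ) ≤ 1 / (4 * Real.pi ^ ((5 : ℝ) / 2)) := by positivity
  exact mul_le_mul_of_nonneg_left houter h0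
end

section
/- Tail estimate away from the saddle: for n ≥ 1, τ ∈ (0,1), ε_n ∈ (0,1], and the function g(u) = (n/2) log(1 + u² + n^{-2/3}ε_n² + 2ε_n n^{-1/3}) - n u²/(2τ) - ε_n n^{2/3}, there exist constants C > 0 and k > 0 (independent of n) such that ∫_{|u| > 1} e^{g(u)} du ≤ C e^{-k n} for all sufficiently large n, provided τ ≤ 1 and ε_n n^{-1/3} ≤ 1. -/
set_option maxHeartbeats 1000000


open MeasureTheory Filter

/-- Tail estimate away from the saddle: for `τ ∈ (0,1)` and `ε_n ∈ (0,1]` with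
`ε_n n^{-1/3} ≤ 1`, the integral of
`exp{(n/2)log(1 + u² + n^{-2/3}ε_n² + 2ε_n n^{-1/3}) - nu²/(2τ) - ε_n n^{2/3}}` over
`|u| > 1` is at most `C e^{-kn}` for all sufficiently large `n`, with constants
`C, k > 0` independent of `n`. -/
theorem saddle_tail_estimate (τ : ℝ) (hτ : τ ∈ Set.Ioo (0 : ℝ) 1) (ε : ℕ → ℝ)
    (hε : ∀ n, ε n ∈ Set.Ioc (0 : ℝ) 1)
    (hε' : ∀ n : ℕ, ε n * (n : ℝ) ^ (-(1 : ℝ) / 3) ≤ 1) :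
    ∃ C > (0 : ℝ), ∃ k > (0 : ℝ), ∀ᶠ n : ℕ in atTop,
      (∫ u in {u : ℝ | 1 < |u|},
          Real.exp ((n / 2) *
              Real.log (1 + u ^ 2 + (n : ℝ) ^ (-(2 : ℝ) / 3) * (ε n) ^ 2
                + 2 * ε n * (n : ℝ) ^ (-(1 : ℝ) / 3))
            - n * u ^ 2 / (2 * τ) - ε n * (n : ℝ) ^ ((2 : ℝ) / 3)))
        ≤ C * Real.exp (-k * n) := by
  obtain ⟨hτ0, hτ1⟩ := hτ
  have hlog2 : Real.log 2 < 1 := by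
    have := Real.log_two_lt_d9
    linarith
  set δ : ℝ := (1 - Real.log 2) / 6 with hδdef
  have hδpos : 0 < δ := by rw [hδdef]; linarith
  set k : ℝ := (1 - Real.log 2) / 4 with hkdef
  have hkpos : 0 < k := by linarith
  set β : ℝ := 1 / (2 * τ) - 1 / 2 with hβdef
  have hβpos : 0 < β := by
    rw [hβdef]
    have h1 : 1 / 2 < 1 / (2 * τ) := by
      apply div_lt_div_of_pos_left <;> nlinarith
    linarith
  refine ⟨Real.sqrt (Real.pi / β), Real.sqrt_pos.mpr (div_pos Real.pi_pos hβpos), k, hkpos, ?_⟩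
  -- eventuality: n ≥ 1 and n^{-1/3} ≤ δ
  have htend : Tendsto (fun n : ℕ => (n : ℝ) ^ (-(1 : ℝ) / 3)) atTop (nhds 0) := by
    have h := tendsto_rpow_neg_atTop (show (0:ℝ) < 1/3 by norm_num)
    have heq : (fun n : ℕ => (n : ℝ) ^ (-(1 : ℝ) / 3))
        = (fun x : ℝ => x ^ (-(1/3 : ℝ))) ∘ (Nat.cast : ℕ → ℝ) := by
      funext m; simp [Function.comp]; norm_num
    rw [heq]
    exact h.comp tendsto_natCast_atTop_atTop
  have hev1 : ∀ᶠ n : ℕ in atTop, (n : ℝ) ^ (-(1 : ℝ) / 3) ≤ δ := by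
    filter_upwards [htend.eventually (eventually_le_nhds hδpos)] with n hn using hn
  filter_upwards [hev1, eventually_ge_atTop 1] with n hnδ hn1
  have hn1' : (1 : ℝ) ≤ (n : ℝ) := by exact_mod_cast hn1
  obtain ⟨hε0, hε1⟩ := hε n
  set s : Set ℝ := {u : ℝ | 1 < |u|} with hsdef
  have hs : MeasurableSet s := (isOpen_lt continuous_const continuous_abs).measurableSet
  set S : ℝ := (n : ℝ) ^ (-(2 : ℝ) / 3) * (ε n) ^ 2 + 2 * ε n * (n : ℝ) ^ (-(1 : ℝ) / 3)
    with hSdef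
  have hr1pos : (0:ℝ) < (n : ℝ) ^ (-(1 : ℝ) / 3) := by positivity
  have hr2pos : (0:ℝ) < (n : ℝ) ^ (-(2 : ℝ) / 3) := by positivity
  have hSnonneg : 0 ≤ S := by positivity
  have hrle : (n : ℝ) ^ (-(2 : ℝ) / 3) ≤ (n : ℝ) ^ (-(1 : ℝ) / 3) :=
    Real.rpow_le_rpow_of_exponent_le hn1' (by norm_num)
  have hS3δ : S ≤ 3 * δ := by
    have h1 : (n : ℝ) ^ (-(2 : ℝ) / 3) * (ε n) ^ 2 ≤ (n : ℝ) ^ (-(1 : ℝ) / 3) := by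
      calc (n : ℝ) ^ (-(2 : ℝ) / 3) * (ε n) ^ 2 ≤ (n : ℝ) ^ (-(1 : ℝ) / 3) * 1 := by
            apply mul_le_mul hrle _ (by positivity) (le_of_lt hr1pos)
            nlinarith
        _ = (n : ℝ) ^ (-(1 : ℝ) / 3) := mul_one _
    have h2 : 2 * ε n * (n : ℝ) ^ (-(1 : ℝ) / 3) ≤ 2 * (n : ℝ) ^ (-(1 : ℝ) / 3) := by
      nlinarith
    rw [hSdef]; nlinarith
  -- the integrand
  set f : ℝ → ℝ := fun u => Real.exp ((n / 2) *
      Real.log (1 + u ^ 2 + (n : ℝ) ^ (-(2 : ℝ) / 3) * (ε n) ^ 2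
        + 2 * ε n * (n : ℝ) ^ (-(1 : ℝ) / 3))
      - n * u ^ 2 / (2 * τ) - ε n * (n : ℝ) ^ ((2 : ℝ) / 3)) with hfdef
  set g : ℝ → ℝ := fun u => Real.exp (-k * n) * Real.exp (-(n * β) * u ^ 2) with hgdef
  have hnβpos : 0 < (n : ℝ) * β := by positivity
  have hgint : Integrable g := (integrable_exp_neg_mul_sq hnβpos).const_mul _
  -- pointwise bound on s
  have hbound : ∀ u ∈ s, f u ≤ g u := by
    intro u hu
    have hu1 : 1 < |u| := hu
    have hu2 : 1 ≤ u ^ 2 := by nlinarith [sq_abs u, abs_nonneg u]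
    have hargpos : 0 < 1 + u ^ 2 + S := by nlinarith
    have hlog1 : Real.log (1 + u ^ 2 + S) ≤ Real.log ((1 + 3 * δ) * (1 + u ^ 2)) := by
      apply Real.log_le_log hargpos
      nlinarith
    have hlog2' : Real.log ((1 + 3 * δ) * (1 + u ^ 2))
        = Real.log (1 + 3 * δ) + Real.log (1 + u ^ 2) := by
      apply Real.log_mul <;> nlinarith
    have hl1 : Real.log (1 + 3 * δ) ≤ 3 * δ := by
      have := Real.log_le_sub_one_of_pos (show (0:ℝ) < 1 + 3 * δ by linarith)
      linarith
    have hl2 : Real.log (1 + u ^ 2) ≤ Real.log 2 + (u ^ 2 - 1) := by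
      have h2u : 1 + u ^ 2 ≤ 2 * u ^ 2 := by linarith
      have := Real.log_le_log (by linarith : (0:ℝ) < 1 + u ^ 2) h2u
      have hsplit : Real.log (2 * u ^ 2) = Real.log 2 + Real.log (u ^ 2) := by
        apply Real.log_mul <;> nlinarith
      have hlu : Real.log (u ^ 2) ≤ u ^ 2 - 1 := by
        have := Real.log_le_sub_one_of_pos (show (0:ℝ) < u ^ 2 by nlinarith)
        linarith
      linarith
    have hkey : Real.log (1 + u ^ 2 + S) ≤ u ^ 2 - 2 * k := by
      have : 3 * δ + Real.log 2 + (u ^ 2 - 1) = u ^ 2 - 2 * k := by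
        rw [hδdef, hkdef]; ring
      linarith
    have hεpos : 0 ≤ ε n * (n : ℝ) ^ ((2 : ℝ) / 3) := by positivity
    have hexp : (n / 2 : ℝ) * Real.log (1 + u ^ 2 + S) - n * u ^ 2 / (2 * τ)
        - ε n * (n : ℝ) ^ ((2 : ℝ) / 3) ≤ -k * n + (-(n * β) * u ^ 2) := by
      have hstep : (n / 2 : ℝ) * Real.log (1 + u ^ 2 + S)
          ≤ (n / 2) * (u ^ 2 - 2 * k) := by
        apply mul_le_mul_of_nonneg_left hkey
        positivity
      have hquad : (n / 2 : ℝ) * u ^ 2 - n * u ^ 2 / (2 * τ) = -(n * β) * u ^ 2 := by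
        rw [hβdef]; field_simp; ring
      nlinarith [hquad]
    calc f u = Real.exp ((n / 2 : ℝ) * Real.log (1 + u ^ 2 + S) - n * u ^ 2 / (2 * τ)
          - ε n * (n : ℝ) ^ ((2 : ℝ) / 3)) := by rw [hfdef, hSdef]; ring_nf
      _ ≤ Real.exp (-k * n + (-(n * β) * u ^ 2)) := Real.exp_le_exp.mpr hexp
      _ = g u := by rw [hgdef, Real.exp_add]
  -- integrability of f on s
  have hfcont : Continuous f := by
    apply Real.continuous_exp.comp
    apply Continuous.sub
    apply Continuous.sub
    · exact continuous_const.mul ((Continuous.log (by continuity)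
        (fun u => by nlinarith [sq_nonneg u, hr1pos, hr2pos, hε0, sq_nonneg (ε n)])))
    · exact (continuous_const.mul (continuous_pow 2)).div_const _
    · exact continuous_const
  have hfint : IntegrableOn f s := by
    apply Integrable.mono' (hgint.restrict) (hfcont.aestronglyMeasurable.restrict)
    refine (ae_restrict_iff' hs).mpr (Filter.Eventually.of_forall fun u hu => ?_)
    rw [Real.norm_eq_abs, abs_of_pos (Real.exp_pos _)]
    exact hbound u hu
  calc (∫ u in s, f u) ≤ ∫ u in s, g u :=
        setIntegral_mono_on hfint hgint.integrableOn hs hbound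
    _ ≤ ∫ u, g u := setIntegral_le_integral hgint
        (Filter.Eventually.of_forall fun u => by positivity)
    _ = Real.exp (-k * n) * Real.sqrt (Real.pi / (n * β)) := by
        rw [hgdef, MeasureTheory.integral_const_mul, integral_gaussian _]
    _ ≤ Real.sqrt (Real.pi / β) * Real.exp (-k * n) := by
        rw [mul_comm]
        apply mul_le_mul_of_nonneg_right _ (le_of_lt (Real.exp_pos _))
        apply Real.sqrt_le_sqrt
        apply div_le_div_of_nonneg_left Real.pi_pos.le hβpos
        nlinarith
end
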